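/- arXiv:1205.4260 — 8 statements merged into one kernel-verified Lean document; each statement's English description precedes it below -/
import Mathlib

section
/- Suppose f satisfies a global Łojasiewicz inequality and is bounded below. Then f is flow-closed: for every differentiable curve x : [0,∞) → E satisfying x′(t) = −∇f(x(t)) for all t ≥ 0, the limit lim_{t→∞} x(t) exists; in particular, every positive-time trajectory of −∇f is contained in a compact subset of E. -/
/-!
Along a trajectory of `-∇f`, the value `f (γ t)` has derivative `-‖∇f (γ t)‖²`, so it decreases
and, `f` being bounded below, converges to some `c` in the closure of the range of `f`. Near
level `c` the Łojasiewicz inequality `‖∇f‖ ≥ k (f - c) ^ a` bounds the speed `‖γ'‖ = ‖∇f (γ)‖` by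
the derivative of `-(f (γ t) - c) ^ (1 - a) / (k (1 - a))`; hence the trajectory has finite
length, is Cauchy and converges. If `f (γ t)` reaches `c` in finite time, `∇f` vanishes along
`γ` from then on and the trajectory stops.
-/

open Set Filter Topology

section

variable {E : Type*} [NormedAddCommGroup E]

theorem norm_sub_le_sub_of_norm_deriv_le_deriv [NormedSpace ℝ E] {γ γ' : ℝ → E} {B B' : ℝ → ℝ}
    {s t : ℝ} (hst : s ≤ t) (hγc : ContinuousOn γ (Icc s t))
    (hγ : ∀ x ∈ Ico s t, HasDerivWithinAt γ (γ' x) (Ici x) x)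
    (hBc : ContinuousOn B (Icc s t)) (hB : ∀ x ∈ Ico s t, HasDerivWithinAt B (B' x) (Ici x) x)
    (bound : ∀ x ∈ Ico s t, ‖γ' x‖ ≤ B' x) :
    ‖γ t - γ s‖ ≤ B t - B s := by
  refine image_norm_le_of_norm_deriv_right_le_deriv_boundary' (f := fun x ↦ γ x - γ s)
    (B := fun x ↦ B x - B s) (hγc.sub continuousOn_const)
    (fun x hx ↦ (hγ x hx).sub_const _) (by simp) (hBc.sub continuousOn_const)
    (fun x hx ↦ (hB x hx).sub_const _) bound (right_mem_Icc.2 hst)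

theorem cauchySeq_of_norm_sub_le_sub {γ : ℝ → E} {B : ℝ → ℝ} {T : ℝ} (hB : CauchySeq B)
    (h : ∀ s t, T ≤ s → s ≤ t → ‖γ t - γ s‖ ≤ B s - B t) : CauchySeq γ := by
  rw [Metric.cauchySeq_iff']
  intro ε hε
  obtain ⟨N, hN⟩ := Metric.cauchySeq_iff.1 hB ε hε
  refine ⟨max N T, fun n hn ↦ ?_⟩
  have hN' : N ≤ max N T := le_max_left N T
  calc dist (γ n) (γ (max N T)) ≤ B (max N T) - B n := by
        rw [dist_eq_norm]; exact h _ _ (le_max_right N T) hn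
    _ ≤ dist (B (max N T)) (B n) := (le_abs_self _).trans_eq (Real.dist_eq _ _).symm
    _ < ε := hN _ hN' _ (hN'.trans hn)

theorem exists_isCompact_forall_mem_of_tendsto [ProperSpace E] {γ : ℝ → E} {T : ℝ} {L : E}
    (hγ : ContinuousOn γ (Ici T)) (hL : Tendsto γ atTop (𝓝 L)) :
    ∃ C : Set E, IsCompact C ∧ ∀ t, T ≤ t → γ t ∈ C := by
  obtain ⟨M, hM⟩ := Metric.tendsto_atTop.1 hL 1 one_pos
  refine ⟨γ '' Icc T (max M T) ∪ Metric.closedBall L 1,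
    (isCompact_Icc.image_of_continuousOn (hγ.mono Icc_subset_Ici_self)).union
      (isCompact_closedBall L 1), fun t ht ↦ ?_⟩
  rcases le_or_gt t (max M T) with htM | htM
  · exact Or.inl ⟨t, ⟨ht, htM⟩, rfl⟩
  · exact Or.inr (hM t ((le_max_left M T).trans htM.le)).le

end

theorem exists_tendsto_of_antitoneOn_Ici {g : ℝ → ℝ} {T : ℝ} (hg : AntitoneOn g (Ici T))
    (hb : BddBelow (g '' Ici T)) :
    ∃ c, Tendsto g atTop (𝓝 c) ∧ ∀ t, T ≤ t → c ≤ g t := by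
  set g' : ℝ → ℝ := fun t ↦ g (max t T)
  have hg' : Antitone g' := fun s t hst ↦
    hg (le_max_right s T) (le_max_right t T) (max_le_max hst le_rfl)
  have hb' : BddBelow (range g') :=
    hb.mono (range_subset_iff.2 fun t ↦ mem_image_of_mem g (le_max_right t T))
  have hlim := tendsto_atTop_ciInf hg' hb'
  have heq : ∀ t, T ≤ t → g' t = g t := fun t ht ↦ by simp only [g', max_eq_left ht]
  refine ⟨_, hlim.congr' (eventually_atTop.2 ⟨T, heq⟩), fun t ht ↦ ?_⟩
  rw [← heq t ht]
  exact hg'.le_of_tendsto hlim t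

theorem le_sq_mul_rpow_neg_div {n d k a : ℝ} (hd : 0 < d) (hk : 0 < k) (h : k * d ^ a ≤ n) :
    n ≤ n ^ 2 * d ^ (-a) / k := by
  have hkd : 0 < k * d ^ a := mul_pos hk (Real.rpow_pos_of_pos hd a)
  have hn : 0 ≤ n := hkd.le.trans h
  calc n = n * 1 := (mul_one n).symm
    _ ≤ n * (n / (k * d ^ a)) := mul_le_mul_of_nonneg_left ((one_le_div hkd).2 h) hn
    _ = n ^ 2 * d ^ (-a) / k := by rw [Real.rpow_neg hd.le]; field_simp

section

variable {E : Type*} [NormedAddCommGroup E] [InnerProductSpace ℝ E] [CompleteSpace E]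
  {f : E → ℝ} {γ : ℝ → E} {T : ℝ}

def HasLojasiewiczInequalityAt (f : E → ℝ) (c : ℝ) : Prop :=
  ∃ ε > (0:ℝ), ∃ k > (0:ℝ), ∃ a : ℝ,
    0 < a ∧ a < 1 ∧ ∀ x : E, |f x - c| < ε → ‖gradient f x‖ ≥ k * |f x - c| ^ a

namespace GradientFlow

theorem hasDerivWithinAt_comp {s : Set ℝ} {t : ℝ} (hf : DifferentiableAt ℝ f (γ t))
    (hγ : HasDerivWithinAt γ (-gradient f (γ t)) s t) :
    HasDerivWithinAt (f ∘ γ) (-‖gradient f (γ t)‖ ^ 2) s t := by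
  refine (hf.hasGradientAt.hasFDerivAt.comp_hasDerivWithinAt t hγ).congr_deriv ?_
  rw [map_neg, InnerProductSpace.toDual_apply_apply, real_inner_self_eq_norm_sq]

theorem antitoneOn_comp (hf : Differentiable ℝ f)
    (hγ : ∀ t, T ≤ t → HasDerivWithinAt γ (-gradient f (γ t)) (Ici T) t) :
    AntitoneOn (f ∘ γ) (Ici T) := by
  have hderiv t (ht : T ≤ t) := hasDerivWithinAt_comp (hf (γ t)) (hγ t ht)
  refine antitoneOn_of_hasDerivWithinAt_nonpos (f' := fun t ↦ -‖gradient f (γ t)‖ ^ 2)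
    (convex_Ici T) (fun t ht ↦ (hderiv t ht).continuousWithinAt) (fun t ht ↦ ?_) (fun t _ ↦ ?_)
  · rw [interior_Ici] at ht
    exact (hderiv t (le_of_lt ht)).mono interior_subset
  · exact neg_nonpos.2 (sq_nonneg _)

theorem eq_of_forall_comp_eq (hf : Differentiable ℝ f)
    (hγ : ∀ t, T ≤ t → HasDerivWithinAt γ (-gradient f (γ t)) (Ici T) t)
    (hconst : ∀ t, T ≤ t → f (γ t) = f (γ T)) : ∀ t, T ≤ t → γ t = γ T := by
  have hgrad t (ht : T ≤ t) : gradient f (γ t) = 0 := by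
    have h₁ := hasDerivWithinAt_comp (hf (γ t)) (hγ t ht)
    have h₀ : HasDerivWithinAt (f ∘ γ) 0 (Ici T) t :=
      (hasDerivWithinAt_const t _ (f (γ T))).congr (fun u hu ↦ hconst u hu) (hconst t ht)
    simpa using (uniqueDiffOn_Ici T t ht).eq_deriv _ h₁ h₀
  intro t ht
  refine constant_of_has_deriv_right_zero (fun u hu ↦ (hγ u hu.1).continuousWithinAt.mono
    Icc_subset_Ici_self) (fun u hu ↦ ?_) t ⟨ht, le_rfl⟩
  simpa [hgrad u hu.1] using (hγ u hu.1).mono (Ici_subset_Ici.2 hu.1)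

theorem norm_sub_le_of_lojasiewicz (hf : Differentiable ℝ f) {c k a : ℝ} (hk : 0 < k)
    (ha : a < 1) (hγ : ∀ t, T ≤ t → HasDerivWithinAt γ (-gradient f (γ t)) (Ici T) t)
    (hpos : ∀ t, T ≤ t → c < f (γ t))
    (hloj : ∀ t, T ≤ t → k * (f (γ t) - c) ^ a ≤ ‖gradient f (γ t)‖)
    {s t : ℝ} (hs : T ≤ s) (hst : s ≤ t) :
    ‖γ t - γ s‖ ≤ ((f (γ s) - c) ^ (1 - a) - (f (γ t) - c) ^ (1 - a)) / (k * (1 - a)) := by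
  have ha' : 0 < 1 - a := sub_pos.2 ha
  set B : ℝ → ℝ := fun u ↦ -(f (γ u) - c) ^ (1 - a) / (k * (1 - a))
  have hB u (hu : T ≤ u) : HasDerivWithinAt B
      (‖gradient f (γ u)‖ ^ 2 * (f (γ u) - c) ^ (-a) / k) (Ici T) u := by
    have := (((hasDerivWithinAt_comp (hf (γ u)) (hγ u hu)).sub_const c).rpow_const
      (p := 1 - a) (Or.inl (sub_pos.2 (hpos u hu)).ne')).neg.div_const (k * (1 - a))
    refine this.congr_deriv ?_
    rw [Function.comp_apply, show 1 - a - 1 = -a by ring]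
    field_simp
  have hsub : ∀ u ∈ Ico s t, Ici u ⊆ Ici T := fun u hu ↦ Ici_subset_Ici.2 (hs.trans hu.1)
  have key := norm_sub_le_sub_of_norm_deriv_le_deriv hst
    (fun u hu ↦ (hγ u (hs.trans hu.1)).continuousWithinAt.mono
      (Icc_subset_Ici_self.trans (Ici_subset_Ici.2 hs)))
    (fun u hu ↦ (hγ u (hs.trans hu.1)).mono (hsub u hu))
    (fun u hu ↦ (hB u (hs.trans hu.1)).continuousWithinAt.mono
      (Icc_subset_Ici_self.trans (Ici_subset_Ici.2 hs)))
    (fun u hu ↦ (hB u (hs.trans hu.1)).mono (hsub u hu))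
    (fun u hu ↦ by
      rw [norm_neg]
      exact le_sq_mul_rpow_neg_div (sub_pos.2 (hpos u (hs.trans hu.1))) hk
        (hloj u (hs.trans hu.1)))
  refine key.trans_eq ?_
  simp only [B]
  ring

theorem exists_tendsto_of_lojasiewicz (hf : Differentiable ℝ f)
    (hγ : ∀ t, T ≤ t → HasDerivWithinAt γ (-gradient f (γ t)) (Ici T) t) {c : ℝ}
    (hc : Tendsto (f ∘ γ) atTop (𝓝 c)) (hc_le : ∀ t, T ≤ t → c ≤ f (γ t))
    (hloj : HasLojasiewiczInequalityAt f c) : ∃ L, Tendsto γ atTop (𝓝 L) := by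
  obtain ⟨ε, hε, k, hk, a, -, ha, hLoj⟩ := hloj
  obtain ⟨T₀, hT₀⟩ : ∃ T₀, ∀ t, T₀ ≤ t → T ≤ t ∧ f (γ t) < c + ε := eventually_atTop.1
    ((eventually_ge_atTop T).and (hc.eventually_lt_const (lt_add_of_pos_right c hε)))
  have hγ₀ t (ht : T₀ ≤ t) : HasDerivWithinAt γ (-gradient f (γ t)) (Ici T₀) t :=
    (hγ t (hT₀ t ht).1).mono (Ici_subset_Ici.2 (hT₀ T₀ le_rfl).1)
  by_cases hreach : ∃ t₀, T₀ ≤ t₀ ∧ f (γ t₀) ≤ c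
  · obtain ⟨t₀, ht₀, hft₀⟩ := hreach
    have hγ₁ t (ht : t₀ ≤ t) := (hγ₀ t (ht₀.trans ht)).mono (Ici_subset_Ici.2 ht₀)
    have hconst t (ht : t₀ ≤ t) : f (γ t) = f (γ t₀) :=
      le_antisymm (antitoneOn_comp hf hγ₁ self_mem_Ici ht ht)
        (hft₀.trans (hc_le t (hT₀ t (ht₀.trans ht)).1))
    exact ⟨γ t₀, tendsto_const_nhds.congr'
      (eventually_atTop.2 ⟨t₀, fun t ht ↦ (eq_of_forall_comp_eq hf hγ₁ hconst t ht).symm⟩)⟩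
  push Not at hreach
  have hloj t (ht : T₀ ≤ t) : k * (f (γ t) - c) ^ a ≤ ‖gradient f (γ t)‖ := by
    have hpos : 0 < f (γ t) - c := sub_pos.2 (hreach t ht)
    have h := hLoj (γ t) (by rw [abs_of_pos hpos]; linarith [(hT₀ t ht).2])
    rwa [abs_of_pos hpos] at h
  have hψ : Tendsto (fun t ↦ (f (γ t) - c) ^ (1 - a) / (k * (1 - a))) atTop (𝓝 0) := by
    have h := ((hc.sub_const c).rpow_const (p := 1 - a) (Or.inr (sub_pos.2 ha).le)).div_const
      (k * (1 - a))
    rwa [sub_self, Real.zero_rpow (sub_pos.2 ha).ne', zero_div] at h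
  refine cauchySeq_tendsto_of_complete (cauchySeq_of_norm_sub_le_sub (T := T₀) hψ.cauchySeq
    fun s t hs hst ↦ ?_)
  rw [← sub_div]
  exact norm_sub_le_of_lojasiewicz hf hk ha hγ₀ hreach hloj hs hst

end GradientFlow

end

/-- A function satisfying a global Łojasiewicz inequality and bounded
below is flow-closed: every positive-time trajectory of `-∇f` converges, and in
particular is contained in a compact set. -/
theorem stmt3 {E : Type*} [NormedAddCommGroup E] [InnerProductSpace ℝ E]
    [FiniteDimensional ℝ E]
    (f : E → ℝ) (hf : ContDiff ℝ 1 f)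
    (hloj : ∀ fc ∈ closure (Set.range f), ∃ ε > (0:ℝ), ∃ k > (0:ℝ), ∃ a : ℝ,
      0 < a ∧ a < 1 ∧ ∀ x : E, |f x - fc| < ε → ‖gradient f x‖ ≥ k * |f x - fc| ^ a)
    (hbdd : BddBelow (Set.range f))
    (γ : ℝ → E)
    (hγ : ∀ t : ℝ, 0 ≤ t → HasDerivWithinAt γ (-(gradient f (γ t))) (Set.Ici 0) t) :
    (∃ L : E, Filter.Tendsto γ Filter.atTop (nhds L)) ∧
      ∃ C : Set E, IsCompact C ∧ ∀ t : ℝ, 0 ≤ t → γ t ∈ C := by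
  have hfd : Differentiable ℝ f := hf.differentiable one_ne_zero
  obtain ⟨c, hc, hc_le⟩ := exists_tendsto_of_antitoneOn_Ici (GradientFlow.antitoneOn_comp hfd hγ)
    (hbdd.mono ((image_subset_range _ _).trans (range_comp_subset_range γ f)))
  have hc_mem : c ∈ closure (range f) :=
    mem_closure_of_tendsto hc (Eventually.of_forall fun t ↦ mem_range_self (γ t))
  obtain ⟨L, hL⟩ := GradientFlow.exists_tendsto_of_lojasiewicz hfd hγ hc hc_le (hloj c hc_mem)
  exact ⟨⟨L, hL⟩, exists_isCompact_forall_mem_of_tendsto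
    (fun t ht ↦ (hγ t ht).continuousWithinAt) hL⟩
end

section
/- Fix f_c ≥ 0 and suppose there exist constants k > 0 and ε > 0 such that ‖∇f_T(x)‖ ≥ k·|f_T(x) − f_c|^{3/4} for every x ∈ ℂⁿ with |f_T(x) − f_c| < ε. Then, with the same constants, ‖∇f_K(x)‖ ≥ k·|f_K(x) − f_c|^{3/4} for every x ∈ ℂⁿ with |f_K(x) − f_c| < ε. -/
open scoped Matrix

noncomputable section

/-- Matrix-vector multiplication, viewed as a map on Euclidean space
(the fundamental vector field of a linear action). -/
def mulVecE {n : ℕ} (ξ : Matrix (Fin n) (Fin n) ℂ) (x : EuclideanSpace ℂ (Fin n)) :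
    EuclideanSpace ℂ (Fin n) :=
  (WithLp.equiv 2 (Fin n → ℂ)).symm (ξ.mulVec (WithLp.equiv 2 (Fin n → ℂ) x))

/-- The real Frobenius inner product `⟪ξ,η⟫ = Re (tr (ξᴴ η))` on complex matrices. -/
def innK {n : ℕ} (ξ η : Matrix (Fin n) (Fin n) ℂ) : ℝ :=
  (Matrix.trace (ξᴴ * η)).re

/-!
The moment map is `K`-equivariant, so `f_K = ‖μ‖²` is `K`-invariant and `‖∇f_K‖` is constant on
`K`-orbits; every orbit meets the set where `μ` takes values in `𝔱`. At such a point `y` we have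
`f_K(y) = f_T(y)`, while `f_K - f_T = ‖μ - P_𝔱 μ‖² ≤ ‖μ(z) - μ(y)‖² = O(‖z - y‖²)` because `μ` is
quadratic. Hence `f_K - f_T` has zero derivative at `y`, so `∇f_K(y) = ∇f_T(y)`, and the
inequality for `f_T` at `y` is the inequality for `f_K` at `x`.
-/

open Filter Topology Asymptotics

section Calculus

variable {E F : Type*} [NormedAddCommGroup E] [NormedSpace ℝ E] [NormedAddCommGroup F]
  [NormedSpace ℝ F]

theorem hasFDerivAt_zero_of_isBigO_sq {h : E → F} {y : E}
    (hO : h =O[𝓝 y] fun z => ‖z - y‖ ^ 2) : HasFDerivAt h (0 : E →L[ℝ] F) y := by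
  have hy : h y = 0 := hO.eq_zero_of_norm_pow two_ne_zero
  rw [hasFDerivAt_iff_isLittleO]
  simpa [hy] using hO.trans_isLittleO (isLittleO_pow_sub_sub y one_lt_two)

theorem fderiv_eq_of_hasFDerivAt_sub_zero {f g : E → F} {y : E}
    (h : HasFDerivAt (f - g) (0 : E →L[ℝ] F) y) : fderiv ℝ f y = fderiv ℝ g y := by
  by_cases hg : DifferentiableAt ℝ g y
  · have hf : HasFDerivAt f (0 + fderiv ℝ g y) y := by
      simpa using h.add hg.hasFDerivAt
    rw [hf.fderiv, zero_add]
  · have hf : ¬ DifferentiableAt ℝ f y := fun hf => hg (by simpa using hf.sub h.differentiableAt)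
    rw [fderiv_zero_of_not_differentiableAt hf, fderiv_zero_of_not_differentiableAt hg]

end Calculus

section Gradient

variable {F : Type*} [NormedAddCommGroup F] [InnerProductSpace ℝ F] [CompleteSpace F]

theorem norm_gradient_eq_norm_fderiv (f : F → ℝ) (x : F) : ‖gradient f x‖ = ‖fderiv ℝ f x‖ :=
  (InnerProductSpace.toDual ℝ F).symm.norm_map _

theorem norm_gradient_comp_linearIsometryEquiv (f : F → ℝ) (A : F ≃ₗᵢ[ℝ] F) (x : F) :
    ‖gradient (f ∘ A) x‖ = ‖gradient f (A x)‖ := by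
  rw [norm_gradient_eq_norm_fderiv, norm_gradient_eq_norm_fderiv,
    ← A.coe_toContinuousLinearEquiv, A.toContinuousLinearEquiv.comp_right_fderiv]
  exact ContinuousLinearMap.opNorm_comp_linearIsometryEquiv _ A

theorem norm_gradient_apply_of_comp_eq {f : F → ℝ} {A : F ≃ₗᵢ[ℝ] F} (hf : f ∘ A = f) (x : F) :
    ‖gradient f (A x)‖ = ‖gradient f x‖ := by
  rw [← norm_gradient_comp_linearIsometryEquiv, hf]

theorem gradient_eq_of_hasFDerivAt_sub_zero {f g : F → ℝ} {y : F}
    (h : HasFDerivAt (f - g) (0 : F →L[ℝ] ℝ) y) : gradient f y = gradient g y := by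
  rw [gradient, gradient, fderiv_eq_of_hasFDerivAt_sub_zero h]

end Gradient

theorem re_inner_map_self_sub_le {𝕜 E : Type*} [RCLike 𝕜] [NormedAddCommGroup E]
    [InnerProductSpace 𝕜 E] (T : E →L[𝕜] E) (z y : E) :
    RCLike.re (inner 𝕜 (T z) z) - RCLike.re (inner 𝕜 (T y) y) ≤
      ‖T‖ * ((‖z‖ + ‖y‖) * ‖z - y‖) :=
  calc RCLike.re (inner 𝕜 (T z) z) - RCLike.re (inner 𝕜 (T y) y)
      = RCLike.re (inner 𝕜 (T (z - y)) z + inner 𝕜 (T y) (z - y)) := by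
        simp only [map_sub, inner_sub_left, inner_sub_right, map_add]; ring
    _ ≤ ‖inner 𝕜 (T (z - y)) z‖ + ‖inner 𝕜 (T y) (z - y)‖ :=
        (RCLike.re_le_norm _).trans (norm_add_le _ _)
    _ ≤ ‖T (z - y)‖ * ‖z‖ + ‖T y‖ * ‖z - y‖ :=
        add_le_add (norm_inner_le_norm _ _) (norm_inner_le_norm _ _)
    _ ≤ ‖T‖ * ‖z - y‖ * ‖z‖ + ‖T‖ * ‖y‖ * ‖z - y‖ := by
        gcongr <;> exact T.le_opNorm _
    _ = ‖T‖ * ((‖z‖ + ‖y‖) * ‖z - y‖) := by ring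

attribute [local instance] Matrix.frobeniusNormedAddCommGroup

variable {n : ℕ}

section Frobenius

lemma innK_self_eq_norm_sq (ξ : Matrix (Fin n) (Fin n) ℂ) : innK ξ ξ = ‖ξ‖ ^ 2 := by
  rw [Matrix.frobenius_norm_def, ← Real.sqrt_eq_rpow, Real.sq_sqrt (by positivity)]
  simp only [innK, Matrix.trace, Matrix.diag, Matrix.mul_apply, Matrix.conjTranspose_apply,
    Complex.re_sum]
  rw [Finset.sum_comm]
  simp [Complex.mul_re, Complex.sq_norm, Complex.normSq_apply]

lemma innK_comm (ξ η : Matrix (Fin n) (Fin n) ℂ) : innK ξ η = innK η ξ := by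
  rw [innK, innK, ← Matrix.conjTranspose_conjTranspose ξ, ← Matrix.conjTranspose_mul,
    Matrix.trace_conjTranspose, Matrix.conjTranspose_conjTranspose]
  exact Complex.conj_re _

lemma innK_add_left (ξ ξ' η : Matrix (Fin n) (Fin n) ℂ) :
    innK (ξ + ξ') η = innK ξ η + innK ξ' η := by
  simp [innK, Matrix.add_mul]

lemma innK_sub_left (ξ ξ' η : Matrix (Fin n) (Fin n) ℂ) :
    innK (ξ - ξ') η = innK ξ η - innK ξ' η := by
  simp [innK, Matrix.sub_mul]

lemma norm_add_sq_of_innK_eq_zero {ξ η : Matrix (Fin n) (Fin n) ℂ} (h : innK ξ η = 0) :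
    ‖ξ + η‖ ^ 2 = ‖ξ‖ ^ 2 + ‖η‖ ^ 2 := by
  rw [← innK_self_eq_norm_sq, ← innK_self_eq_norm_sq, ← innK_self_eq_norm_sq, innK_add_left,
    innK_comm ξ, innK_comm η, innK_add_left, innK_add_left, innK_comm η ξ, h]
  ring

lemma innK_mul_mul_left (A B ξ η : Matrix (Fin n) (Fin n) ℂ) :
    innK (A * ξ * B) η = innK ξ (star A * η * star B) := by
  simp only [innK, Matrix.star_eq_conjTranspose, Matrix.conjTranspose_mul, Matrix.mul_assoc]
  rw [Matrix.trace_mul_comm]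
  simp only [Matrix.mul_assoc]

lemma norm_mulVecE_le (ξ : Matrix (Fin n) (Fin n) ℂ) (x : EuclideanSpace ℂ (Fin n)) :
    ‖mulVecE ξ x‖ ≤ ‖ξ‖ * ‖x‖ := by
  have := Matrix.frobenius_norm_mul ξ (Matrix.replicateCol Unit (WithLp.ofLp x))
  rwa [← Matrix.replicateCol_mulVec, Matrix.frobenius_norm_replicateCol,
    Matrix.frobenius_norm_replicateCol] at this

lemma opNorm_toEuclideanCLM_le (ξ : Matrix (Fin n) (Fin n) ℂ) :
    ‖Matrix.toEuclideanCLM (𝕜 := ℂ) ξ‖ ≤ ‖ξ‖ :=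
  ContinuousLinearMap.opNorm_le_bound _ (norm_nonneg ξ) (norm_mulVecE_le ξ)

end Frobenius

section Unitary

lemma mulVecE_mul (A B : Matrix (Fin n) (Fin n) ℂ) (x : EuclideanSpace ℂ (Fin n)) :
    mulVecE (A * B) x = mulVecE A (mulVecE B x) := by
  simp [mulVecE, Matrix.mulVec_mulVec]

lemma mulVecE_smul (A : Matrix (Fin n) (Fin n) ℂ) (c : ℂ) (x : EuclideanSpace ℂ (Fin n)) :
    mulVecE A (c • x) = c • mulVecE A x :=
  (Matrix.toEuclideanCLM (𝕜 := ℂ) (n := Fin n) A).map_smul c x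

variable {U : Matrix (Fin n) (Fin n) ℂ}

def unitaryToCLM (hU : U ∈ Matrix.unitaryGroup (Fin n) ℂ) :
    unitary (EuclideanSpace ℂ (Fin n) →L[ℂ] EuclideanSpace ℂ (Fin n)) :=
  ⟨Matrix.toEuclideanCLM (𝕜 := ℂ) (n := Fin n) U, Unitary.map_mem _ hU⟩

def unitaryIsometry (hU : U ∈ Matrix.unitaryGroup (Fin n) ℂ) :
    EuclideanSpace ℂ (Fin n) ≃ₗᵢ[ℝ] EuclideanSpace ℂ (Fin n) :=
  { (Unitary.linearIsometryEquiv (unitaryToCLM hU)).toLinearEquiv.restrictScalars ℝ with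
    norm_map' := Unitary.norm_map (unitaryToCLM hU) }

lemma unitaryIsometry_apply (hU : U ∈ Matrix.unitaryGroup (Fin n) ℂ)
    (x : EuclideanSpace ℂ (Fin n)) :
    unitaryIsometry hU x = mulVecE U x := rfl

lemma inner_mulVecE_unitary (hU : U ∈ Matrix.unitaryGroup (Fin n) ℂ)
    (x y : EuclideanSpace ℂ (Fin n)) :
    inner ℂ (mulVecE U x) (mulVecE U y) = inner ℂ x y :=
  Unitary.inner_map_map (unitaryToCLM hU) x y

lemma star_mul_conj_mul_eq (hU : U ∈ Matrix.unitaryGroup (Fin n) ℂ)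
    (ξ : Matrix (Fin n) (Fin n) ℂ) :
    star U * (U * ξ * star U) * U = ξ := by
  calc star U * (U * ξ * star U) * U = (star U * U) * ξ * (star U * U) := by
        simp only [Matrix.mul_assoc]
    _ = ξ := by rw [Matrix.mem_unitaryGroup_iff'.1 hU, Matrix.one_mul, Matrix.mul_one]

lemma norm_unitary_conj (hU : U ∈ Matrix.unitaryGroup (Fin n) ℂ)
    (ξ : Matrix (Fin n) (Fin n) ℂ) : ‖U * ξ * star U‖ = ‖ξ‖ := by
  have h : ‖U * ξ * star U‖ ^ 2 = ‖ξ‖ ^ 2 := by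
    rw [← innK_self_eq_norm_sq, ← innK_self_eq_norm_sq, innK_mul_mul_left, star_star,
      star_mul_conj_mul_eq hU]
  exact (pow_left_inj₀ (norm_nonneg _) (norm_nonneg _) two_ne_zero).1 h

end Unitary

structure IsMomentMap (𝔨 : Submodule ℝ (Matrix (Fin n) (Fin n) ℂ))
    (α : Matrix (Fin n) (Fin n) ℂ) (μ : EuclideanSpace ℂ (Fin n) → Matrix (Fin n) (Fin n) ℂ) :
    Prop where
  mem : ∀ x, μ x ∈ 𝔨
  innK_eq : ∀ x, ∀ ξ ∈ 𝔨,
    innK (μ x) ξ = (1/2) * (inner ℂ (Complex.I • mulVecE ξ x) x : ℂ).re - innK α ξ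

structure IsOrthogonalProjection (𝔨 𝔱 : Submodule ℝ (Matrix (Fin n) (Fin n) ℂ))
    (P : Matrix (Fin n) (Fin n) ℂ → Matrix (Fin n) (Fin n) ℂ) : Prop where
  mem : ∀ ξ, P ξ ∈ 𝔱
  innK_sub_eq_zero : ∀ ξ ∈ 𝔨, ∀ η ∈ 𝔱, innK (ξ - P ξ) η = 0

variable {𝔨 𝔱 : Submodule ℝ (Matrix (Fin n) (Fin n) ℂ)}

section Projection

variable {P : Matrix (Fin n) (Fin n) ℂ → Matrix (Fin n) (Fin n) ℂ}

lemma IsOrthogonalProjection.norm_sq_eq_add (hP : IsOrthogonalProjection 𝔨 𝔱 P)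
    {ξ : Matrix (Fin n) (Fin n) ℂ} (hξ : ξ ∈ 𝔨) : ‖ξ‖ ^ 2 = ‖P ξ‖ ^ 2 + ‖ξ - P ξ‖ ^ 2 := by
  rw [add_comm, ← norm_add_sq_of_innK_eq_zero (hP.innK_sub_eq_zero ξ hξ _ (hP.mem ξ)),
    sub_add_cancel]

lemma IsOrthogonalProjection.norm_sub_le (hP : IsOrthogonalProjection 𝔨 𝔱 P)
    {ξ τ : Matrix (Fin n) (Fin n) ℂ} (hξ : ξ ∈ 𝔨) (hτ : τ ∈ 𝔱) : ‖ξ - P ξ‖ ≤ ‖ξ - τ‖ := by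
  have h := norm_add_sq_of_innK_eq_zero (hP.innK_sub_eq_zero ξ hξ _ (𝔱.sub_mem (hP.mem ξ) hτ))
  rw [sub_add_sub_cancel] at h
  nlinarith [norm_nonneg (ξ - P ξ), norm_nonneg (ξ - τ), sq_nonneg ‖P ξ - τ‖]

lemma IsOrthogonalProjection.apply_eq_self (hP : IsOrthogonalProjection 𝔨 𝔱 P) (h𝔱𝔨 : 𝔱 ≤ 𝔨)
    {τ : Matrix (Fin n) (Fin n) ℂ} (hτ : τ ∈ 𝔱) : P τ = τ := by
  have := hP.norm_sub_le (h𝔱𝔨 hτ) hτ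
  rw [sub_self, norm_zero, norm_le_zero_iff, sub_eq_zero] at this
  exact this.symm

end Projection

lemma eq_of_forall_innK_eq {a b : Matrix (Fin n) (Fin n) ℂ} (ha : a ∈ 𝔨) (hb : b ∈ 𝔨)
    (h : ∀ ξ ∈ 𝔨, innK a ξ = innK b ξ) : a = b := by
  have hab : ‖a - b‖ ^ 2 = 0 := by
    rw [← innK_self_eq_norm_sq, innK_sub_left, h _ (𝔨.sub_mem ha hb), sub_self]
  simpa [sub_eq_zero] using hab

namespace IsMomentMap

variable {α : Matrix (Fin n) (Fin n) ℂ} {μ : EuclideanSpace ℂ (Fin n) → Matrix (Fin n) (Fin n) ℂ}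

lemma norm_sub_le (hμ : IsMomentMap 𝔨 α μ) (z y : EuclideanSpace ℂ (Fin n)) :
    ‖μ z - μ y‖ ≤ (‖z‖ + ‖y‖) / 2 * ‖z - y‖ := by
  set e := μ z - μ y
  have he : e ∈ 𝔨 := 𝔨.sub_mem (hμ.mem z) (hμ.mem y)
  have hIe : ‖Complex.I • Matrix.toEuclideanCLM (𝕜 := ℂ) e‖ ≤ ‖e‖ := by
    rw [norm_smul, Complex.norm_I, one_mul]
    exact opNorm_toEuclideanCLM_le e
  have key : ‖e‖ ^ 2 ≤ ‖e‖ * ((‖z‖ + ‖y‖) / 2 * ‖z - y‖) :=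
    calc ‖e‖ ^ 2 = (1/2) * ((inner ℂ (Complex.I • mulVecE e z) z : ℂ).re
          - (inner ℂ (Complex.I • mulVecE e y) y : ℂ).re) := by
          rw [← innK_self_eq_norm_sq, innK_sub_left, hμ.innK_eq z e he, hμ.innK_eq y e he]; ring
      _ ≤ (1/2) * (‖e‖ * ((‖z‖ + ‖y‖) * ‖z - y‖)) := by
          gcongr
          exact (re_inner_map_self_sub_le (Complex.I • Matrix.toEuclideanCLM (𝕜 := ℂ) e) z y).trans
            (mul_le_mul_of_nonneg_right hIe (by positivity))
      _ = _ := by ring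
  rcases (norm_nonneg e).eq_or_lt with h0 | hpos
  · rw [← h0]; positivity
  · exact le_of_mul_le_mul_left (by rwa [sq] at key) hpos

lemma sub_isBigO (hμ : IsMomentMap 𝔨 α μ) (y : EuclideanSpace ℂ (Fin n)) :
    (fun z => μ z - μ y) =O[𝓝 y] fun z => z - y := by
  refine IsBigO.of_bound (‖y‖ + 1) ?_
  filter_upwards [Metric.ball_mem_nhds y one_pos] with z hz
  rw [Metric.mem_ball, dist_eq_norm] at hz
  have hz' : ‖z‖ ≤ ‖y‖ + 1 := by linarith [norm_le_norm_add_norm_sub' z y]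
  calc ‖μ z - μ y‖ ≤ (‖z‖ + ‖y‖) / 2 * ‖z - y‖ := hμ.norm_sub_le z y
    _ ≤ (‖y‖ + 1) * ‖z - y‖ := by gcongr; linarith [norm_nonneg y]

lemma apply_mulVecE_unitary (hμ : IsMomentMap 𝔨 α μ) {U : Matrix (Fin n) (Fin n) ℂ}
    (hU : U ∈ Matrix.unitaryGroup (Fin n) ℂ) (hU𝔨 : ∀ ξ ∈ 𝔨, U * ξ * star U ∈ 𝔨)
    (hU𝔨' : ∀ ξ ∈ 𝔨, star U * ξ * U ∈ 𝔨) (hUα : U * α * star U = α)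
    (z : EuclideanSpace ℂ (Fin n)) : μ (mulVecE U z) = U * μ z * star U := by
  refine eq_of_forall_innK_eq (hμ.mem _) (hU𝔨 _ (hμ.mem z)) fun ξ hξ => ?_
  have hmul : U * (star U * ξ * U) = ξ * U := by
    rw [← Matrix.mul_assoc, ← Matrix.mul_assoc, Matrix.mem_unitaryGroup_iff.1 hU, Matrix.one_mul]
  have hinner : inner ℂ (Complex.I • mulVecE ξ (mulVecE U z)) (mulVecE U z)
      = inner ℂ (Complex.I • mulVecE (star U * ξ * U) z) z := by
    rw [← inner_mulVecE_unitary hU (Complex.I • mulVecE (star U * ξ * U) z) z, mulVecE_smul,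
      ← mulVecE_mul U, hmul, mulVecE_mul]
  have hα : innK α (star U * ξ * U) = innK α ξ := by
    conv_rhs => rw [← hUα, innK_mul_mul_left, star_star]
  rw [hμ.innK_eq _ ξ hξ, innK_mul_mul_left, star_star, hμ.innK_eq z _ (hU𝔨' ξ hξ), hinner, hα]

lemma norm_sq_sub_norm_sq_proj_isBigO (hμ : IsMomentMap 𝔨 α μ)
    {P : Matrix (Fin n) (Fin n) ℂ → Matrix (Fin n) (Fin n) ℂ} (hP : IsOrthogonalProjection 𝔨 𝔱 P)
    {y : EuclideanSpace ℂ (Fin n)} (hy : μ y ∈ 𝔱) :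
    (fun z => ‖μ z‖ ^ 2 - ‖P (μ z)‖ ^ 2) =O[𝓝 y] fun z => ‖z - y‖ ^ 2 := by
  have hle : ∀ z, ‖‖μ z‖ ^ 2 - ‖P (μ z)‖ ^ 2‖ ≤ ‖‖μ z - μ y‖ ^ 2‖ := fun z => by
    rw [hP.norm_sq_eq_add (hμ.mem z), add_sub_cancel_left, Real.norm_of_nonneg (by positivity),
      Real.norm_of_nonneg (by positivity)]
    gcongr
    exact hP.norm_sub_le (hμ.mem z) hy
  exact (isBigO_of_le _ hle).trans ((hμ.sub_isBigO y).norm_norm.pow 2)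

end IsMomentMap

theorem stmt4_general (n : ℕ) (𝔨 : Submodule ℝ (Matrix (Fin n) (Fin n) ℂ))
    (α : Matrix (Fin n) (Fin n) ℂ)
    (μ : EuclideanSpace ℂ (Fin n) → Matrix (Fin n) (Fin n) ℂ)
    (hμmem : ∀ x, μ x ∈ 𝔨)
    (hμ : ∀ x, ∀ ξ ∈ 𝔨,
      innK (μ x) ξ
        = (1/2) * (inner ℂ (Complex.I • mulVecE ξ x) x : ℂ).re - innK α ξ)
    -- the compact group `K ⊆ U(n)`, normalizing `𝔨` and fixing `α`
    (K : Subgroup (Matrix.unitaryGroup (Fin n) ℂ))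
    (hKconj : ∀ g : K, ∀ ξ ∈ 𝔨,
      ((g : Matrix.unitaryGroup (Fin n) ℂ) : Matrix (Fin n) (Fin n) ℂ) * ξ *
        ((g⁻¹ : Matrix.unitaryGroup (Fin n) ℂ) : Matrix (Fin n) (Fin n) ℂ) ∈ 𝔨)
    (hKα : ∀ g : K,
      ((g : Matrix.unitaryGroup (Fin n) ℂ) : Matrix (Fin n) (Fin n) ℂ) * α *
        ((g⁻¹ : Matrix.unitaryGroup (Fin n) ℂ) : Matrix (Fin n) (Fin n) ℂ) = α)
    -- the maximal torus: a Lie subalgebra `𝔱 ⊆ 𝔨` meeting every adjoint orbit of `μ`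
    (𝔱 : Submodule ℝ (Matrix (Fin n) (Fin n) ℂ)) (h𝔱𝔨 : 𝔱 ≤ 𝔨)
    (hmax : ∀ x : EuclideanSpace ℂ (Fin n), ∃ g : K,
      ((g : Matrix.unitaryGroup (Fin n) ℂ) : Matrix (Fin n) (Fin n) ℂ) * μ x *
        ((g⁻¹ : Matrix.unitaryGroup (Fin n) ℂ) : Matrix (Fin n) (Fin n) ℂ) ∈ 𝔱)
    -- the orthogonal projection `P𝔱 : 𝔨 → 𝔱`
    (P𝔱 : Matrix (Fin n) (Fin n) ℂ → Matrix (Fin n) (Fin n) ℂ)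
    (hPmem : ∀ ξ, P𝔱 ξ ∈ 𝔱)
    (hPperp : ∀ ξ ∈ 𝔨, ∀ η ∈ 𝔱, innK (ξ - P𝔱 ξ) η = 0)
    -- the two functions `f_K = ‖μ‖²` and `f_T = ‖P𝔱 ∘ μ‖²`
    (fK fT : EuclideanSpace ℂ (Fin n) → ℝ)
    (hfK : ∀ x, fK x = innK (μ x) (μ x))
    (hfT : ∀ x, fT x = innK (P𝔱 (μ x)) (P𝔱 (μ x)))
    (fc : ℝ)
    (k ε : ℝ)
    (hT : ∀ x : EuclideanSpace ℂ (Fin n),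
      |fT x - fc| < ε → ‖gradient fT x‖ ≥ k * |fT x - fc| ^ ((3:ℝ)/4)) :
    ∀ x : EuclideanSpace ℂ (Fin n),
      |fK x - fc| < ε → ‖gradient fK x‖ ≥ k * |fK x - fc| ^ ((3:ℝ)/4) := by
  intro x hx
  have hμ' : IsMomentMap 𝔨 α μ := ⟨hμmem, hμ⟩
  have hP : IsOrthogonalProjection 𝔨 𝔱 P𝔱 := ⟨hPmem, hPperp⟩
  obtain ⟨g, hgx⟩ := hmax x
  set U : Matrix (Fin n) (Fin n) ℂ :=
    ((g : Matrix.unitaryGroup (Fin n) ℂ) : Matrix (Fin n) (Fin n) ℂ)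
  have hU : U ∈ Matrix.unitaryGroup (Fin n) ℂ := (g : Matrix.unitaryGroup (Fin n) ℂ).2
  have hμU : ∀ z, μ (mulVecE U z) = U * μ z * star U :=
    hμ'.apply_mulVecE_unitary hU (hKconj g) (by simpa using hKconj g⁻¹) (hKα g)
  have hfK' : fK = fun z => ‖μ z‖ ^ 2 := funext fun z => (hfK z).trans (innK_self_eq_norm_sq _)
  have hfT' : fT = fun z => ‖P𝔱 (μ z)‖ ^ 2 :=
    funext fun z => (hfT z).trans (innK_self_eq_norm_sq _)
  set y := mulVecE U x
  have hy : μ y ∈ 𝔱 := (hμU x).symm ▸ hgx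
  have hfTy : fT y = fK x := by
    simp only [hfT', hfK']
    rw [hP.apply_eq_self h𝔱𝔨 hy, hμU, norm_unitary_conj hU]
  have hgrad : gradient fK y = gradient fT y := by
    rw [hfK', hfT']
    exact gradient_eq_of_hasFDerivAt_sub_zero
      (hasFDerivAt_zero_of_isBigO_sq (hμ'.norm_sq_sub_norm_sq_proj_isBigO hP hy))
  have hnorm : ‖gradient fK y‖ = ‖gradient fK x‖ :=
    norm_gradient_apply_of_comp_eq (A := unitaryIsometry hU)
      (funext fun z => by simp [hfK', unitaryIsometry_apply, hμU, norm_unitary_conj hU]) x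
  rw [← hnorm, hgrad, ← hfTy]
  exact hT y (hfTy ▸ hx)

/-- Reduction to a maximal torus: a Łojasiewicz inequality (with fixed
level `f_c`, exponent 3/4) for the norm-square of the moment map of the maximal torus
implies the same inequality, with the same constants, for the norm-square of the moment
map of the full group. -/
theorem stmt4 (n : ℕ) (𝔨 : Submodule ℝ (Matrix (Fin n) (Fin n) ℂ))
    (hskew : ∀ ξ ∈ 𝔨, ξᴴ = -ξ)
    (hlie : ∀ ξ ∈ 𝔨, ∀ η ∈ 𝔨, ξ * η - η * ξ ∈ 𝔨)
    (α : Matrix (Fin n) (Fin n) ℂ) (hα : α ∈ 𝔨)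
    (hcentral : ∀ ξ ∈ 𝔨, α * ξ = ξ * α)
    (μ : EuclideanSpace ℂ (Fin n) → Matrix (Fin n) (Fin n) ℂ)
    (hμmem : ∀ x, μ x ∈ 𝔨)
    (hμ : ∀ x, ∀ ξ ∈ 𝔨,
      innK (μ x) ξ
        = (1/2) * (inner ℂ (Complex.I • mulVecE ξ x) x : ℂ).re - innK α ξ)
    -- the compact group `K ⊆ U(n)`, normalizing `𝔨` and fixing `α`
    (K : Subgroup (Matrix.unitaryGroup (Fin n) ℂ))
    (hKconj : ∀ g : K, ∀ ξ ∈ 𝔨,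
      ((g : Matrix.unitaryGroup (Fin n) ℂ) : Matrix (Fin n) (Fin n) ℂ) * ξ *
        ((g⁻¹ : Matrix.unitaryGroup (Fin n) ℂ) : Matrix (Fin n) (Fin n) ℂ) ∈ 𝔨)
    (hKα : ∀ g : K,
      ((g : Matrix.unitaryGroup (Fin n) ℂ) : Matrix (Fin n) (Fin n) ℂ) * α *
        ((g⁻¹ : Matrix.unitaryGroup (Fin n) ℂ) : Matrix (Fin n) (Fin n) ℂ) = α)
    -- the maximal torus: a Lie subalgebra `𝔱 ⊆ 𝔨` meeting every adjoint orbit of `μ`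
    (𝔱 : Submodule ℝ (Matrix (Fin n) (Fin n) ℂ)) (h𝔱𝔨 : 𝔱 ≤ 𝔨)
    (h𝔱lie : ∀ ξ ∈ 𝔱, ∀ η ∈ 𝔱, ξ * η - η * ξ ∈ 𝔱)
    (hmax : ∀ x : EuclideanSpace ℂ (Fin n), ∃ g : K,
      ((g : Matrix.unitaryGroup (Fin n) ℂ) : Matrix (Fin n) (Fin n) ℂ) * μ x *
        ((g⁻¹ : Matrix.unitaryGroup (Fin n) ℂ) : Matrix (Fin n) (Fin n) ℂ) ∈ 𝔱)
    -- the orthogonal projection `P𝔱 : 𝔨 → 𝔱`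
    (P𝔱 : Matrix (Fin n) (Fin n) ℂ → Matrix (Fin n) (Fin n) ℂ)
    (hPmem : ∀ ξ, P𝔱 ξ ∈ 𝔱)
    (hPperp : ∀ ξ ∈ 𝔨, ∀ η ∈ 𝔱, innK (ξ - P𝔱 ξ) η = 0)
    -- the two functions `f_K = ‖μ‖²` and `f_T = ‖P𝔱 ∘ μ‖²`
    (fK fT : EuclideanSpace ℂ (Fin n) → ℝ)
    (hfK : ∀ x, fK x = innK (μ x) (μ x))
    (hfT : ∀ x, fT x = innK (P𝔱 (μ x)) (P𝔱 (μ x)))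
    (fc : ℝ) (hfc : 0 ≤ fc)
    (k ε : ℝ) (hk : 0 < k) (hε : 0 < ε)
    (hT : ∀ x : EuclideanSpace ℂ (Fin n),
      |fT x - fc| < ε → ‖gradient fT x‖ ≥ k * |fT x - fc| ^ ((3:ℝ)/4)) :
    ∀ x : EuclideanSpace ℂ (Fin n),
      |fK x - fc| < ε → ‖gradient fK x‖ ≥ k * |fK x - fc| ^ ((3:ℝ)/4) :=
  stmt4_general n 𝔨 α μ hμmem hμ K hKconj hKα 𝔱 h𝔱𝔨 hmax P𝔱 hPmem hPperp fK fT hfK hfT fc k ε hT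
end
end

section
/- Fix f_c ≥ 0 and suppose that for every μ_c ∈ 𝔨 with ‖μ_c‖² = f_c there exist constants ε′ > 0 and c′ > 0 (depending on μ_c) such that ‖∇f(x)‖ ≥ c′·|f(x) − f_c|^{3/4} whenever ‖μ(x) − μ_c‖ < ε′. Then there exist constants ε > 0 and c > 0 such that ‖∇f(x)‖ ≥ c·|f(x) − f_c|^{3/4} whenever |f(x) − f_c| < ε. -/
/-!
The level set `{‖v‖² = f_c}` of `𝔨` is a sphere, hence compact, so finitely many of the
neighbourhoods on which the local inequality holds cover it; the smallest of their constants
then works on a uniform neighbourhood of the sphere. Finally `|‖y‖ - r|² ≤ |‖y‖² - r²|` for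
`r = √f_c`, so `|f(x) - f_c| < δ²` forces `μ(x)` within `δ` of the sphere.
-/

open Filter Topology Metric

lemma Finset.exists_pos_forall_le {ι : Type*} (t : Finset ι) {g : ι → ℝ}
    (hg : ∀ i ∈ t, 0 < g i) : ∃ c > 0, ∀ i ∈ t, c ≤ g i :=
  ((((eventually_all_finset t).2 fun i hi => eventually_le_nhds (hg i hi)).filter_mono
    nhdsWithin_le_nhds).and (self_mem_nhdsWithin : Set.Ioi (0 : ℝ) ∈ 𝓝[>] 0)).exists.imp
    fun _ h => ⟨h.2, h.1⟩

lemma IsCompact.exists_uniform_lower_bound {α X : Type*} [PseudoMetricSpace X] {K : Set X}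
    (hK : IsCompact K) {μ : α → X} {A B : α → ℝ} (hB : ∀ x, 0 ≤ B x)
    (hloc : ∀ v ∈ K, ∃ ε > 0, ∃ c > 0, ∀ x, dist (μ x) v < ε → c * B x ≤ A x) :
    ∃ δ > 0, ∃ c > 0, ∀ x, ∀ v ∈ K, dist (μ x) v < δ → c * B x ≤ A x := by
  choose! ε hε c hc hbound using hloc
  obtain ⟨t, htK, hcover⟩ := hK.elim_nhds_subcover (fun v => ball v (ε v / 2))
    fun v hv => ball_mem_nhds v (half_pos (hε v hv))
  obtain ⟨δ, hδ, hδle⟩ := t.exists_pos_forall_le fun w hw => half_pos (hε w (htK w hw))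
  obtain ⟨c₀, hc₀, hc₀le⟩ := t.exists_pos_forall_le fun w hw => hc w (htK w hw)
  refine ⟨δ, hδ, c₀, hc₀, fun x v hv hxv => ?_⟩
  obtain ⟨w, hwt, hvw⟩ := Set.mem_iUnion₂.1 (hcover hv)
  have hxw : dist (μ x) w < ε w := calc
    dist (μ x) w ≤ dist (μ x) v + dist v w := dist_triangle _ _ _
    _ < δ + ε w / 2 := add_lt_add hxv (mem_ball.1 hvw)
    _ ≤ ε w := by linarith [hδle w hwt]
  calc c₀ * B x ≤ c w * B x := mul_le_mul_of_nonneg_right (hc₀le w hwt) (hB x)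
    _ ≤ A x := hbound w (htK w hwt) x hxw

lemma sq_sub_le_abs_sq_sub_sq {a b : ℝ} (ha : 0 ≤ a) (hb : 0 ≤ b) :
    (a - b) ^ 2 ≤ |a ^ 2 - b ^ 2| := by
  rcases le_total a b with hab | hab
  · rw [abs_of_nonpos (by nlinarith)]
    nlinarith
  · rw [abs_of_nonneg (by nlinarith)]
    nlinarith

lemma exists_norm_eq_and_norm_sub_eq {F : Type*} [NormedAddCommGroup F] [NormedSpace ℝ F]
    [Nontrivial F] (y : F) {r : ℝ} (hr : 0 ≤ r) : ∃ v : F, ‖v‖ = r ∧ ‖y - v‖ = |‖y‖ - r| := by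
  rcases eq_or_ne y 0 with rfl | hy
  · obtain ⟨v, hv⟩ := exists_norm_eq F hr
    exact ⟨v, hv, by simp [hv, abs_of_nonneg hr]⟩
  · have hy' : 0 < ‖y‖ := norm_pos_iff.2 hy
    refine ⟨(r / ‖y‖) • y, ?_, ?_⟩
    · rw [norm_smul, Real.norm_of_nonneg (by positivity), div_mul_cancel₀ _ hy'.ne']
    · rw [show y - (r / ‖y‖) • y = (1 - r / ‖y‖) • y by rw [sub_smul, one_smul], norm_smul,
        Real.norm_eq_abs, ← abs_of_pos hy', ← abs_mul, abs_of_pos hy']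
      congr 1
      field_simp

theorem stmt5_general {E 𝔨 : Type*}
    [NormedAddCommGroup E] [InnerProductSpace ℝ E] [FiniteDimensional ℝ E]
    [NormedAddCommGroup 𝔨] [InnerProductSpace ℝ 𝔨] [FiniteDimensional ℝ 𝔨]
    (μ : E → 𝔨)
    (f : E → ℝ) (hf : ∀ x, f x = ‖μ x‖ ^ 2)
    (fc : ℝ) (hfc : 0 ≤ fc)
    (hloc : ∀ μc : 𝔨, ‖μc‖ ^ 2 = fc → ∃ ε' > (0:ℝ), ∃ c' > (0:ℝ), ∀ x : E,
      ‖μ x - μc‖ < ε' → ‖gradient f x‖ ≥ c' * |f x - fc| ^ ((3:ℝ)/4)) :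
    ∃ ε > (0:ℝ), ∃ c > (0:ℝ), ∀ x : E,
      |f x - fc| < ε → ‖gradient f x‖ ≥ c * |f x - fc| ^ ((3:ℝ)/4) := by
  rcases subsingleton_or_nontrivial 𝔨 with h𝔨 | h𝔨
  · have hf0 (x : E) : f x = 0 := by simp [hf, Subsingleton.elim (μ x) 0]
    rcases hfc.eq_or_lt with rfl | hpos
    · exact ⟨1, one_pos, 1, one_pos, fun x _ => by simp [hf0]⟩
    · exact ⟨fc, hpos, 1, one_pos, fun x hx => by simp [hf0, abs_of_pos hpos] at hx⟩
  obtain ⟨δ, hδ, c, hc, hunif⟩ := (isCompact_sphere (0 : 𝔨) √fc).exists_uniform_lower_bound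
    (fun x => Real.rpow_nonneg (abs_nonneg (f x - fc)) _) fun v hv => by
      simpa only [dist_eq_norm] using
        hloc v (by rw [mem_sphere_zero_iff_norm.1 hv, Real.sq_sqrt hfc])
  refine ⟨δ ^ 2, by positivity, c, hc, fun x hx => ?_⟩
  obtain ⟨v, hv, hxv⟩ := exists_norm_eq_and_norm_sub_eq (μ x) (Real.sqrt_nonneg fc)
  have hnear : |‖μ x‖ - √fc| < δ := abs_lt_of_sq_lt_sq (lt_of_le_of_lt
    (sq_sub_le_abs_sq_sub_sq (norm_nonneg _) (Real.sqrt_nonneg fc))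
    (by rwa [Real.sq_sqrt hfc, ← hf])) hδ.le
  exact hunif x v (mem_sphere_zero_iff_norm.2 hv) (by rwa [dist_eq_norm, hxv])

/-- If the Łojasiewicz inequality for `f = ‖μ‖²` at level `f_c` holds
locally near each `μ_c` in `𝔨` with `‖μ_c‖² = f_c`, then it holds globally on the set
`|f - f_c| < ε`. -/
theorem stmt5 {E 𝔨 : Type*}
    [NormedAddCommGroup E] [InnerProductSpace ℝ E] [FiniteDimensional ℝ E]
    [NormedAddCommGroup 𝔨] [InnerProductSpace ℝ 𝔨] [FiniteDimensional ℝ 𝔨]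
    (μ : E → 𝔨) (hμ : Differentiable ℝ μ)
    (f : E → ℝ) (hf : ∀ x, f x = ‖μ x‖ ^ 2)
    (fc : ℝ) (hfc : 0 ≤ fc)
    (hloc : ∀ μc : 𝔨, ‖μc‖ ^ 2 = fc → ∃ ε' > (0:ℝ), ∃ c' > (0:ℝ), ∀ x : E,
      ‖μ x - μc‖ < ε' → ‖gradient f x‖ ≥ c' * |f x - fc| ^ ((3:ℝ)/4)) :
    ∃ ε > (0:ℝ), ∃ c > (0:ℝ), ∀ x : E,
      |f x - fc| < ε → ‖gradient f x‖ ≥ c * |f x - fc| ^ ((3:ℝ)/4) :=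
  stmt5_general μ f hf fc hfc hloc
end

section
/- For every φ_c in the image of φ there exist constants c > 0 and ε > 0 such that ‖v‖·‖φ(v)‖² ≥ c·| ‖φ(v)‖² − ‖φ_c‖² |^{3/2} for every v ∈ V₁ with ‖φ(v) − φ_c‖ < ε. -/
/-!
Write `y = φc + α`, so that `φ v - φc = A v - y`. Close to `y` one has `‖A v - y‖ ≤ ‖A v‖`
(trivially if `y = 0`, and because `A v` stays away from `0` otherwise), hence
`‖φ v - φc‖ ≤ ‖A‖ ‖v‖`. With `x = ‖φ v‖`, `p = ‖φc‖` and `t = ‖φ v - φc‖ ≥ |x - p|`, the scalar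
bound `|x² - p²|^{3/2} ≤ 15 t x²` holds for small `t`: for `p > 0` because `x` is comparable to
`p` and `|x² - p²| ≤ t (x + p)`, and for `p = 0` because it reads `x³ ≤ 15 t x²` with `x ≤ t`.
-/

theorem Real.rpow_three_halves {a : ℝ} (ha : 0 ≤ a) : a ^ ((3:ℝ) / 2) = a * √a := by
  rw [show (3:ℝ) / 2 = 1 + 1 / 2 by norm_num, Real.rpow_add' ha (by norm_num), Real.rpow_one,
    Real.sqrt_eq_rpow]

theorem exists_norm_sub_le_norm {E : Type*} [SeminormedAddCommGroup E] (y : E) :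
    ∃ ε > 0, ∀ z : E, ‖z - y‖ < ε → ‖z - y‖ ≤ ‖z‖ := by
  rcases (norm_nonneg y).eq_or_lt with hy | hy
  · exact ⟨1, one_pos, fun z _ => by linarith [norm_sub_le z y]⟩
  · refine ⟨‖y‖ / 2, half_pos hy, fun z hz => ?_⟩
    linarith [norm_sub_norm_le y z, norm_sub_rev z y]

theorem exists_abs_sq_sub_sq_rpow_le {p : ℝ} (hp : 0 ≤ p) :
    ∃ δ > 0, ∀ x t : ℝ, 0 ≤ x → |x - p| ≤ t → t < δ →
      |x ^ 2 - p ^ 2| ^ ((3:ℝ) / 2) ≤ 15 * t * x ^ 2 := by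
  rcases hp.eq_or_lt with rfl | hp
  · refine ⟨1, one_pos, fun x t hx hxt _ => ?_⟩
    rw [sub_zero, abs_of_nonneg hx] at hxt
    rw [zero_pow two_ne_zero, sub_zero, abs_of_nonneg (by positivity),
      Real.rpow_three_halves (by positivity), Real.sqrt_sq hx]
    nlinarith [sq_nonneg x]
  · refine ⟨p / 2, half_pos hp, fun x t hx hxt ht => ?_⟩
    obtain ⟨hlo, hhi⟩ := abs_le.mp hxt
    have hdiff : |x ^ 2 - p ^ 2| ≤ t * (5 * p / 2) := by
      rw [show x ^ 2 - p ^ 2 = (x - p) * (x + p) by ring, abs_mul,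
        abs_of_nonneg (by linarith : 0 ≤ x + p)]
      exact mul_le_mul hxt (by linarith) (by linarith) (by linarith)
    have hsqrt : √|x ^ 2 - p ^ 2| ≤ 3 * p / 2 :=
      Real.sqrt_le_iff.mpr ⟨by positivity, by nlinarith⟩
    have hx2 : p ^ 2 / 4 ≤ x ^ 2 := by nlinarith
    calc |x ^ 2 - p ^ 2| ^ ((3:ℝ) / 2) = |x ^ 2 - p ^ 2| * √|x ^ 2 - p ^ 2| :=
          Real.rpow_three_halves (abs_nonneg _)
      _ ≤ t * (5 * p / 2) * (3 * p / 2) :=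
          mul_le_mul hdiff hsqrt (Real.sqrt_nonneg _) (by nlinarith)
      _ = 15 * t * (p ^ 2 / 4) := by ring
      _ ≤ 15 * t * x ^ 2 := by gcongr; linarith

theorem stmt10_general {V₁ V₂ : Type*}
    [NormedAddCommGroup V₁] [InnerProductSpace ℝ V₁] [FiniteDimensional ℝ V₁]
    [NormedAddCommGroup V₂] [InnerProductSpace ℝ V₂]
    (A : V₁ →ₗ[ℝ] V₂) (α : V₂)
    (φ : V₁ → V₂) (hφ : ∀ v, φ v = A v - α)
    (φc : V₂) :
    ∃ c > (0:ℝ), ∃ ε > (0:ℝ), ∀ v : V₁, ‖φ v - φc‖ < ε →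
      ‖v‖ * ‖φ v‖ ^ 2 ≥ c * |‖φ v‖ ^ 2 - ‖φc‖ ^ 2| ^ ((3:ℝ)/2) := by
  set B := LinearMap.toContinuousLinearMap A
  obtain ⟨ε₀, hε₀, hnear⟩ := exists_norm_sub_le_norm (φc + α)
  obtain ⟨δ, hδ, hlevel⟩ := exists_abs_sq_sub_sq_rpow_le (norm_nonneg φc)
  refine ⟨(15 * (‖B‖ + 1))⁻¹, by positivity, min ε₀ δ, lt_min hε₀ hδ, fun v hv => ?_⟩
  have hsub : φ v - φc = A v - (φc + α) := by rw [hφ]; abel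
  have hdist : ‖φ v - φc‖ ≤ (‖B‖ + 1) * ‖v‖ := calc
    ‖φ v - φc‖ ≤ ‖B v‖ := hsub ▸ hnear (A v) (hsub ▸ hv.trans_le (min_le_left _ _))
    _ ≤ ‖B‖ * ‖v‖ := B.le_opNorm v
    _ ≤ (‖B‖ + 1) * ‖v‖ := by gcongr; linarith
  rw [ge_iff_le, inv_mul_le_iff₀ (by positivity)]
  calc |‖φ v‖ ^ 2 - ‖φc‖ ^ 2| ^ ((3:ℝ) / 2) ≤ 15 * ‖φ v - φc‖ * ‖φ v‖ ^ 2 :=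
        hlevel _ _ (norm_nonneg _) (abs_norm_sub_norm_le _ _) (hv.trans_le (min_le_right _ _))
    _ ≤ 15 * ((‖B‖ + 1) * ‖v‖) * ‖φ v‖ ^ 2 := by gcongr
    _ = 15 * (‖B‖ + 1) * (‖v‖ * ‖φ v‖ ^ 2) := by ring

/-- The affine-map estimate: for `φ(v) = Av − α` and any `φ_c` in the
image of `φ`, one has `‖v‖·‖φ(v)‖² ≥ c·|‖φ(v)‖² − ‖φ_c‖²|^{3/2}` near the level `φ_c`. -/
theorem stmt10 {V₁ V₂ : Type*}
    [NormedAddCommGroup V₁] [InnerProductSpace ℝ V₁] [FiniteDimensional ℝ V₁]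
    [NormedAddCommGroup V₂] [InnerProductSpace ℝ V₂] [FiniteDimensional ℝ V₂]
    (A : V₁ →ₗ[ℝ] V₂) (α : V₂)
    (φ : V₁ → V₂) (hφ : ∀ v, φ v = A v - α)
    (φc : V₂) (hφc : φc ∈ Set.range φ) :
    ∃ c > (0:ℝ), ∃ ε > (0:ℝ), ∀ v : V₁, ‖φ v - φc‖ < ε →
      ‖v‖ * ‖φ v‖ ^ 2 ≥ c * |‖φ v‖ ^ 2 - ‖φc‖ ^ 2| ^ ((3:ℝ)/2) :=
  stmt10_general A α φ hφ φc
end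

section
/- Suppose f is proper (the preimage of every compact subset of ℝ is compact) and that near each critical point f satisfies a Łojasiewicz inequality: for every c ∈ E with ∇f(c) = 0 there exist an open neighbourhood U_c of c and constants k_c > 0 and 0 < α_c < 1 such that ‖∇f(x)‖ ≥ k_c·|f(x) − f(c)|^{α_c} for all x ∈ U_c. Then f satisfies a global Łojasiewicz inequality. -/
/-!
Near each point of the level set `f ⁻¹' {c}` some Łojasiewicz inequality holds: at critical
points by hypothesis, elsewhere because `‖∇f‖` stays bounded away from zero. On the region
`|f - c| < 1` two such inequalities merge into one by taking the smaller constant and the larger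
exponent, so compactness of the level set yields a single inequality on a neighbourhood of it.
Since a proper map is closed, every neighbourhood of the level set contains a whole strip
`|f - c| < ε`.
-/

open Filter Topology

theorem ContDiff.continuous_gradient {𝕜 F : Type*} [RCLike 𝕜] [NormedAddCommGroup F]
    [InnerProductSpace 𝕜 F] [CompleteSpace F] {f : F → 𝕜} (hf : ContDiff 𝕜 1 f) :
    Continuous (gradient f) :=
  (InnerProductSpace.toDual 𝕜 F).symm.continuous.comp (hf.continuous_fderiv one_ne_zero)

theorem mul_rpow_le_of_mul_rpow_le {t y k k' a a' : ℝ} (h : k * t ^ a ≤ y) (ht₀ : 0 ≤ t)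
    (ht₁ : t ≤ 1) (hk : 0 ≤ k) (hk' : k' ≤ k) (ha : 0 ≤ a) (ha' : a ≤ a') :
    k' * t ^ a' ≤ y :=
  (mul_le_mul hk' (Real.rpow_le_rpow_of_exponent_ge' ht₀ ht₁ ha ha')
    (Real.rpow_nonneg ht₀ _) hk).trans h

/-- The guard `|f x - c| < 1` is what allows the constants of two such inequalities to be
merged (see `LojasiewiczAlong.sup`). -/
def LojasiewiczAlong {X : Type*} (f g : X → ℝ) (c : ℝ) (l : Filter X) : Prop :=
  ∃ k > (0 : ℝ), ∃ a : ℝ, 0 < a ∧ a < 1 ∧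
    ∀ᶠ x in l, |f x - c| < 1 → k * |f x - c| ^ a ≤ g x

namespace LojasiewiczAlong

variable {X : Type*} {f g : X → ℝ} {c : ℝ}

theorem bot : LojasiewiczAlong f g c ⊥ :=
  ⟨1, one_pos, 1 / 2, by norm_num, by norm_num, eventually_bot⟩

theorem mono {l l' : Filter X} (h : LojasiewiczAlong f g c l) (hl : l' ≤ l) :
    LojasiewiczAlong f g c l' :=
  let ⟨k, hk, a, ha, ha', hev⟩ := h
  ⟨k, hk, a, ha, ha', hev.filter_mono hl⟩

theorem sup {l₁ l₂ : Filter X} (h₁ : LojasiewiczAlong f g c l₁)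
    (h₂ : LojasiewiczAlong f g c l₂) : LojasiewiczAlong f g c (l₁ ⊔ l₂) := by
  obtain ⟨k₁, hk₁, a₁, ha₁, ha₁', hev₁⟩ := h₁
  obtain ⟨k₂, hk₂, a₂, ha₂, ha₂', hev₂⟩ := h₂
  refine ⟨min k₁ k₂, lt_min hk₁ hk₂, max a₁ a₂, lt_max_of_lt_left ha₁, max_lt ha₁' ha₂',
    eventually_sup.2 ⟨?_, ?_⟩⟩
  · filter_upwards [hev₁] with x hx hx₁
    exact mul_rpow_le_of_mul_rpow_le (hx hx₁) (abs_nonneg _) hx₁.le hk₁.le (min_le_left _ _)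
      ha₁.le (le_max_left _ _)
  · filter_upwards [hev₂] with x hx hx₁
    exact mul_rpow_le_of_mul_rpow_le (hx hx₁) (abs_nonneg _) hx₁.le hk₂.le (min_le_right _ _)
      ha₂.le (le_max_right _ _)

theorem nhdsSet_of_isCompact [TopologicalSpace X] {K : Set X} (hK : IsCompact K)
    (h : ∀ x ∈ K, LojasiewiczAlong f g c (𝓝 x)) : LojasiewiczAlong f g c (𝓝ˢ K) := by
  refine hK.induction_on (p := fun s ↦ LojasiewiczAlong f g c (𝓝ˢ s)) ?_ ?_ ?_ ?_
  · simpa only [nhdsSet_empty] using bot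
  · exact fun s t hst ht ↦ ht.mono (nhdsSet_mono hst)
  · intro s t hs ht
    simpa only [nhdsSet_union] using hs.sup ht
  · intro x hx
    obtain ⟨k, hk, a, ha, ha', hev⟩ := h x hx
    exact ⟨_, mem_nhdsWithin_of_mem_nhds hev.eventually_nhds, k, hk, a, ha, ha',
      eventually_nhdsSet_iff_forall.2 fun _ hy ↦ hy⟩

theorem nhds_of_pos [TopologicalSpace X] {x₀ : X} (hg : ContinuousAt g x₀) (hpos : 0 < g x₀) :
    LojasiewiczAlong f g c (𝓝 x₀) := by
  refine ⟨g x₀ / 2, half_pos hpos, 1 / 2, by norm_num, by norm_num, ?_⟩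
  filter_upwards [hg.eventually (lt_mem_nhds (half_lt_self hpos))] with x hx hx₁
  calc g x₀ / 2 * |f x - c| ^ (1 / 2 : ℝ) ≤ g x₀ / 2 * 1 := by
        gcongr
        exact Real.rpow_le_one (abs_nonneg _) hx₁.le (by norm_num)
    _ ≤ g x := by linarith

theorem exists_pos_of_comap_nhds (h : LojasiewiczAlong f g c (comap f (𝓝 c))) :
    ∃ ε > (0 : ℝ), ∃ k > (0 : ℝ), ∃ a : ℝ, 0 < a ∧ a < 1 ∧
      ∀ x, |f x - c| < ε → k * |f x - c| ^ a ≤ g x := by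
  obtain ⟨k, hk, a, ha, ha', hev⟩ := h
  obtain ⟨ε, hε, hball⟩ := Metric.eventually_nhds_iff.1 (eventually_comap.1 hev)
  exact ⟨min ε 1, lt_min hε one_pos, k, hk, a, ha, ha', fun x hx ↦
    hball (hx.trans_le (min_le_left _ _)) x rfl (hx.trans_le (min_le_right _ _))⟩

end LojasiewiczAlong

/-- A proper function satisfying a Łojasiewicz inequality near each
critical point satisfies a global Łojasiewicz inequality. -/
theorem stmt13 {E : Type*} [NormedAddCommGroup E] [InnerProductSpace ℝ E]
    [FiniteDimensional ℝ E]
    (f : E → ℝ) (hf : ContDiff ℝ 1 f)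
    (hproper : ∀ K : Set ℝ, IsCompact K → IsCompact (f ⁻¹' K))
    (hloc : ∀ c : E, gradient f c = 0 → ∃ U : Set E, IsOpen U ∧ c ∈ U ∧
      ∃ k > (0:ℝ), ∃ a : ℝ, 0 < a ∧ a < 1 ∧
        ∀ x ∈ U, ‖gradient f x‖ ≥ k * |f x - f c| ^ a) :
    ∀ fc ∈ closure (Set.range f), ∃ ε > (0:ℝ), ∃ k > (0:ℝ), ∃ a : ℝ,
      0 < a ∧ a < 1 ∧
        ∀ x : E, |f x - fc| < ε → ‖gradient f x‖ ≥ k * |f x - fc| ^ a := by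
  intro fc _
  have hclosed : IsClosedMap f :=
    (isProperMap_iff_isCompact_preimage.2 ⟨hf.continuous, fun K ↦ hproper K⟩).isClosedMap
  have hfiber : LojasiewiczAlong f (‖gradient f ·‖) fc (𝓝ˢ (f ⁻¹' {fc})) := by
    refine LojasiewiczAlong.nhdsSet_of_isCompact (hproper _ isCompact_singleton) fun x hx ↦ ?_
    by_cases hcrit : gradient f x = 0
    · obtain ⟨U, hU, hxU, k, hk, a, ha, ha', hineq⟩ := hloc x hcrit
      refine ⟨k, hk, a, ha, ha', eventually_of_mem (hU.mem_nhds hxU) fun y hy _ ↦ ?_⟩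
      simpa only [show f x = fc from hx] using hineq y hy
    · exact LojasiewiczAlong.nhds_of_pos hf.continuous_gradient.norm.continuousAt
        (norm_pos_iff.2 hcrit)
  rw [← hclosed.comap_nhds_eq hf.continuous] at hfiber
  exact hfiber.exists_pos_of_comap_nhds
end

section
/- For every x₀ ∈ S the limit x_c := lim_{t→∞} φ(x₀,t) exists; moreover, for every sequence (x_n) in S with x_n → x₀ and every sequence (t_n) in [0,∞) with t_n → ∞, one has φ(x_n, t_n) → x_c. Consequently, the extension of the negative gradient flow to S × [0,∞] obtained by sending (x,∞) to lim_{t→∞} φ(x,t) is continuous. -/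
/-!
Along a descent curve `γ` the function `u = f ∘ γ - c` decreases with `u' = -‖∇f(γ)‖²`, so where
the Łojasiewicz inequality `‖∇f‖ ≥ k u^θ` holds, `‖γ'‖ = ‖∇f(γ)‖ ≤ -(u^(1-θ))' / (k (1 - θ))`.
Hence the length of `γ` after time `s` is at most `u(s)^(1-θ) / (k (1 - θ))`, for every curve
along which `f` tends to `c`. This makes each such curve Cauchy. For `xₙ → x₀` and `tₙ → ∞`,
pick a time `T` at which the remaining length of the curve through `x₀` is small; by continuity
of the flow at time `T` the same holds for the curves through `xₙ`, and `φ(xₙ, T)` is close to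
`φ(x₀, T)`.
-/

open Set Filter Topology

theorem tendsto_rpow_sub_div {α : Type*} {l : Filter α} {u : α → ℝ} {c k θ : ℝ}
    (hu : Tendsto u l (𝓝 c)) (hθ : θ < 1) :
    Tendsto (fun a => (u a - c) ^ (1 - θ) / (k * (1 - θ))) l (𝓝 0) := by
  simpa using ((tendsto_sub_nhds_zero_iff.2 hu).rpow_const_nhds_zero (sub_pos.2 hθ)).div_const
    (k * (1 - θ))

theorem le_sq_mul_rpow_neg_div_s14 {G u k θ : ℝ} (hk : 0 < k) (hu : 0 < u) (hG : 0 ≤ G)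
    (h : k * u ^ θ ≤ G) : G ≤ G ^ 2 * u ^ (-θ) / k := by
  have hpos : 0 < k * u ^ θ := mul_pos hk (Real.rpow_pos_of_pos hu θ)
  rw [Real.rpow_neg hu.le, le_div_iff₀ hk]
  calc G * k = G * (k * u ^ θ) * (u ^ θ)⁻¹ := by field_simp
    _ ≤ G * G * (u ^ θ)⁻¹ := by gcongr
    _ = G ^ 2 * (u ^ θ)⁻¹ := by ring

section

variable {E : Type*} [NormedAddCommGroup E] [InnerProductSpace ℝ E] [CompleteSpace E]

def IsGradientDescentCurve (f : E → ℝ) (γ : ℝ → E) : Prop :=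
  ∀ t, 0 ≤ t → HasDerivWithinAt γ (-gradient f (γ t)) (Ici 0) t

namespace IsGradientDescentCurve

variable {f : E → ℝ} {γ : ℝ → E} {c k ε θ t : ℝ}

theorem continuousOn (hγ : IsGradientDescentCurve f γ) : ContinuousOn γ (Ici 0) :=
  fun t ht => (hγ t ht).continuousWithinAt

theorem hasDerivWithinAt_comp (hγ : IsGradientDescentCurve f γ) (hf : Differentiable ℝ f)
    (ht : 0 ≤ t) : HasDerivWithinAt (f ∘ γ) (-‖gradient f (γ t)‖ ^ 2) (Ici 0) t := by
  have h := (hf (γ t)).hasFDerivAt.comp_hasDerivWithinAt t (hγ t ht)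
  rwa [← inner_gradient_left, inner_neg_right, real_inner_self_eq_norm_sq] at h

theorem antitoneOn_comp (hγ : IsGradientDescentCurve f γ) (hf : Differentiable ℝ f) :
    AntitoneOn (f ∘ γ) (Ici 0) := by
  refine antitoneOn_of_hasDerivWithinAt_nonpos (f' := fun t => -‖gradient f (γ t)‖ ^ 2)
    (convex_Ici 0) (fun t ht => (hγ.hasDerivWithinAt_comp hf ht).continuousWithinAt)
    (fun t ht => ?_) (fun t _ => neg_nonpos.2 (sq_nonneg _))
  rw [interior_Ici] at ht ⊢
  exact (hγ.hasDerivWithinAt_comp hf ht.le).mono Ioi_subset_Ici_self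

theorem le_comp_of_tendsto (hγ : IsGradientDescentCurve f γ) (hf : Differentiable ℝ f)
    (hc : Tendsto (f ∘ γ) atTop (𝓝 c)) (ht : 0 ≤ t) : c ≤ f (γ t) :=
  le_of_tendsto hc <| (eventually_ge_atTop t).mono fun _ hτ =>
    hγ.antitoneOn_comp hf ht (ht.trans hτ) hτ

theorem comp_eq_of_tendsto (hγ : IsGradientDescentCurve f γ) (hf : Differentiable ℝ f)
    (hc : Tendsto (f ∘ γ) atTop (𝓝 c)) (ht : 0 ≤ t) (hct : f (γ t) = c) {τ : ℝ}
    (hτ : t ≤ τ) : f (γ τ) = c :=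
  le_antisymm (hct ▸ hγ.antitoneOn_comp hf ht (ht.trans hτ) hτ)
    (hγ.le_comp_of_tendsto hf hc (ht.trans hτ))

theorem gradient_eq_zero_of_tendsto (hγ : IsGradientDescentCurve f γ) (hf : Differentiable ℝ f)
    (hc : Tendsto (f ∘ γ) atTop (𝓝 c)) (ht : 0 ≤ t) (hct : f (γ t) = c) :
    gradient f (γ t) = 0 := by
  have hconst : HasDerivWithinAt (f ∘ γ) 0 (Ici t) t :=
    (hasDerivWithinAt_const t (Ici t) c).congr
      (fun _ hτ => hγ.comp_eq_of_tendsto hf hc ht hct hτ) hct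
  have h := (uniqueDiffWithinAt_Ici t).eq_deriv _
    ((hγ.hasDerivWithinAt_comp hf ht).mono (Ici_subset_Ici.2 ht)) hconst
  simpa using h

theorem hasDerivWithinAt_rpow_comp_sub (hγ : IsGradientDescentCurve f γ)
    (hf : Differentiable ℝ f) (hc : Tendsto (f ∘ γ) atTop (𝓝 c)) {p : ℝ} (hp : 0 < p)
    (ht : 0 ≤ t) :
    HasDerivWithinAt (fun τ => (f (γ τ) - c) ^ p)
      (-‖gradient f (γ t)‖ ^ 2 * p * (f (γ t) - c) ^ (p - 1)) (Ici t) t := by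
  rcases eq_or_ne (f (γ t)) c with hct | hct
  · have hconst : ∀ τ ∈ Ici t, (f (γ τ) - c) ^ p = 0 := fun τ hτ => by
      rw [hγ.comp_eq_of_tendsto hf hc ht hct hτ, sub_self, Real.zero_rpow hp.ne']
    rw [hγ.gradient_eq_zero_of_tendsto hf hc ht hct]
    simpa using (hasDerivWithinAt_const t (Ici t) (0 : ℝ)).congr hconst (hconst t self_mem_Ici)
  · exact (((hγ.hasDerivWithinAt_comp hf ht).mono (Ici_subset_Ici.2 ht)).sub_const c).rpow_const
      (Or.inl (sub_ne_zero.2 hct))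

theorem norm_sub_le_of_lojasiewicz (hγ : IsGradientDescentCurve f γ) (hf : Differentiable ℝ f)
    (hc : Tendsto (f ∘ γ) atTop (𝓝 c)) (hk : 0 < k) (hθ : θ < 1)
    (hloj : ∀ x, |f x - c| < ε → k * |f x - c| ^ θ ≤ ‖gradient f x‖)
    {s b : ℝ} (hs : 0 ≤ s) (hsb : s ≤ b) (hsε : f (γ s) - c < ε) :
    ‖γ b - γ s‖ ≤ (f (γ s) - c) ^ (1 - θ) / (k * (1 - θ)) := by
  have hp : 0 < 1 - θ := sub_pos.2 hθ
  have hIcc : Icc s b ⊆ Ici 0 := fun τ hτ => hs.trans hτ.1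
  have hu : ContinuousOn (fun τ => f (γ τ) - c) (Icc s b) :=
    (hf.continuous.comp_continuousOn (hγ.continuousOn.mono hIcc)).sub continuousOn_const
  have hderiv : ∀ t ∈ Ico s b, HasDerivWithinAt
      (fun τ => ((f (γ s) - c) ^ (1 - θ) - (f (γ τ) - c) ^ (1 - θ)) / (k * (1 - θ)))
      (‖gradient f (γ t)‖ ^ 2 * (f (γ t) - c) ^ (-θ) / k) (Ici t) t := by
    intro t ht
    refine (((hγ.hasDerivWithinAt_rpow_comp_sub hf hc hp (hs.trans ht.1)).const_sub _).div_const
      (k * (1 - θ))).congr_deriv ?_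
    rw [sub_sub_cancel_left]
    field_simp
  have hbound : ∀ t ∈ Ico s b,
      ‖-gradient f (γ t)‖ ≤ ‖gradient f (γ t)‖ ^ 2 * (f (γ t) - c) ^ (-θ) / k := by
    intro t ht
    have ht0 : 0 ≤ t := hs.trans ht.1
    rw [norm_neg]
    rcases (sub_nonneg.2 (hγ.le_comp_of_tendsto hf hc ht0)).eq_or_lt with hct | hct
    · rw [hγ.gradient_eq_zero_of_tendsto hf hc ht0 (sub_eq_zero.1 hct.symm)]
      simp
    · have htε : |f (γ t) - c| < ε := by
        rw [abs_of_pos hct]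
        have hts : f (γ t) ≤ f (γ s) := hγ.antitoneOn_comp hf hs ht0 ht.1
        linarith
      exact le_sq_mul_rpow_neg_div_s14 hk hct (norm_nonneg _) (abs_of_pos hct ▸ hloj _ htε)
  have hγ' : ∀ t ∈ Ico s b,
      HasDerivWithinAt (fun τ => γ τ - γ s) (-gradient f (γ t)) (Ici t) t :=
    fun t ht => ((hγ t (hs.trans ht.1)).mono (Ici_subset_Ici.2 (hs.trans ht.1))).sub_const (γ s)
  have hb := image_norm_le_of_norm_deriv_right_le_deriv_boundary' (a := s)
    ((hγ.continuousOn.mono hIcc).sub continuousOn_const) hγ'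
    (by simp) (continuousOn_const.sub (hu.rpow_const fun _ _ => Or.inr hp.le) |>.div_const _)
    hderiv hbound (right_mem_Icc.2 hsb)
  refine hb.trans (div_le_div_of_nonneg_right ?_ (by positivity))
  exact sub_le_self _
    (Real.rpow_nonneg (sub_nonneg.2 (hγ.le_comp_of_tendsto hf hc (hs.trans hsb))) _)

theorem exists_tendsto_of_lojasiewicz (hγ : IsGradientDescentCurve f γ)
    (hf : Differentiable ℝ f) (hc : Tendsto (f ∘ γ) atTop (𝓝 c)) (hk : 0 < k) (hε : 0 < ε)
    (hθ : θ < 1) (hloj : ∀ x, |f x - c| < ε → k * |f x - c| ^ θ ≤ ‖gradient f x‖) :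
    ∃ x, Tendsto γ atTop (𝓝 x) := by
  refine cauchySeq_tendsto_of_complete (Metric.cauchySeq_iff'.2 fun δ hδ => ?_)
  obtain ⟨N, ⟨hNδ, hNε⟩, hN⟩ := (((tendsto_rpow_sub_div hc hθ).eventually_lt_const hδ).and
    ((tendsto_sub_nhds_zero_iff.2 hc).eventually_lt_const hε) |>.and (eventually_ge_atTop 0)).exists
  exact ⟨N, fun n hn => (dist_eq_norm _ _).trans_lt
    ((hγ.norm_sub_le_of_lojasiewicz hf hc hk hθ hloj hN hn hNε).trans_lt hNδ)⟩

end IsGradientDescentCurve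

theorem tendsto_of_isGradientDescentCurve_of_lojasiewicz {X ι : Type*} [TopologicalSpace X]
    {f : E → ℝ} {φ : X → ℝ → E} {c k ε θ : ℝ} {x₀ : X} {xc : E} {l : Filter ι} {xn : ι → X}
    {tn : ι → ℝ} (hφ : ∀ x, IsGradientDescentCurve f (φ x)) (hf : Differentiable ℝ f)
    (hk : 0 < k) (hε : 0 < ε) (hθ : θ < 1)
    (hloj : ∀ x, |f x - c| < ε → k * |f x - c| ^ θ ≤ ‖gradient f x‖)
    (hφcont : ∀ T, 0 ≤ T → ContinuousAt (fun x => φ x T) x₀)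
    (hc : ∀ i, Tendsto (f ∘ φ (xn i)) atTop (𝓝 c)) (hc₀ : Tendsto (f ∘ φ x₀) atTop (𝓝 c))
    (hxc : Tendsto (φ x₀) atTop (𝓝 xc)) (hxn : Tendsto xn l (𝓝 x₀))
    (htn : Tendsto tn l atTop) : Tendsto (fun i => φ (xn i) (tn i)) l (𝓝 xc) := by
  set ρ : ℝ → ℝ := fun v => v ^ (1 - θ) / (k * (1 - θ))
  have hρ : Continuous ρ := (Real.continuous_rpow_const (sub_pos.2 hθ).le).div_const _
  refine Metric.tendsto_nhds.2 fun δ hδ => ?_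
  obtain ⟨T, ⟨⟨hTxc, hTε⟩, hTρ⟩, hT⟩ := ((Metric.tendsto_nhds.1 hxc (δ / 3) (by positivity)).and
    ((tendsto_sub_nhds_zero_iff.2 hc₀).eventually_lt_const hε) |>.and
    ((tendsto_rpow_sub_div hc₀ hθ).eventually_lt_const (by positivity : (0 : ℝ) < δ / 3))
    |>.and (eventually_ge_atTop 0)).exists
  have hxnT : Tendsto (fun i => φ (xn i) T) l (𝓝 (φ x₀ T)) := (hφcont T hT).tendsto.comp hxn
  have hfxnT : Tendsto (fun i => f (φ (xn i) T) - c) l (𝓝 (f (φ x₀ T) - c)) :=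
    ((hf.continuous.tendsto _).comp hxnT).sub_const c
  filter_upwards [Metric.tendsto_nhds.1 hxnT (δ / 3) (by positivity),
    hfxnT.eventually_lt_const hTε, ((hρ.tendsto _).comp hfxnT).eventually_lt_const hTρ,
    htn.eventually_ge_atTop T] with i hiT hiε hiρ hit
  have htail : dist (φ (xn i) (tn i)) (φ (xn i) T) ≤ ρ (f (φ (xn i) T) - c) :=
    (dist_eq_norm _ _).trans_le
      ((hφ (xn i)).norm_sub_le_of_lojasiewicz hf (hc i) hk hθ hloj hT hit hiε)
  calc dist (φ (xn i) (tn i)) xc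
      ≤ dist (φ (xn i) (tn i)) (φ (xn i) T) + dist (φ (xn i) T) (φ x₀ T) + dist (φ x₀ T) xc :=
        dist_triangle4 _ _ _ _
    _ < δ / 3 + δ / 3 + δ / 3 := by gcongr; exact htail.trans_lt hiρ
    _ = δ := by ring

end

theorem stmt14_general {E : Type*} [NormedAddCommGroup E] [InnerProductSpace ℝ E]
    [FiniteDimensional ℝ E]
    (f : E → ℝ) (hf : ContDiff ℝ 1 f)
    (φ : E → ℝ → E)
    (hφcont : ContinuousOn (fun q : E × ℝ => φ q.1 q.2) (Set.univ ×ˢ Set.Ici (0:ℝ)))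
    (hφflow : ∀ x, ∀ t : ℝ, 0 ≤ t →
      HasDerivWithinAt (φ x) (-(gradient f (φ x t))) (Set.Ici 0) t)
    (fc : ℝ) (k ε : ℝ) (hk : 0 < k) (hε : 0 < ε)
    (hloj : ∀ x : E, |f x - fc| < ε → ‖gradient f x‖ ≥ k * |f x - fc| ^ ((3:ℝ)/4))
    (S : Set E)
    (hS : S = {x : E | Filter.Tendsto (fun t => f (φ x t)) Filter.atTop (nhds fc)})
    (x₀ : E) (hx₀ : x₀ ∈ S) :
    ∃ xc : E, Filter.Tendsto (fun t => φ x₀ t) Filter.atTop (nhds xc) ∧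
      ∀ (xn : ℕ → E) (tn : ℕ → ℝ), (∀ m, xn m ∈ S) → (∀ m, 0 ≤ tn m) →
        Filter.Tendsto xn Filter.atTop (nhds x₀) →
        Filter.Tendsto tn Filter.atTop Filter.atTop →
        Filter.Tendsto (fun m => φ (xn m) (tn m)) Filter.atTop (nhds xc) := by
  subst hS
  have hf' : Differentiable ℝ f := hf.differentiable one_ne_zero
  have hθ : (3 : ℝ) / 4 < 1 := by norm_num
  obtain ⟨xc, hxc⟩ :=
    IsGradientDescentCurve.exists_tendsto_of_lojasiewicz (hφflow x₀) hf' hx₀ hk hε hθ hloj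
  refine ⟨xc, hxc, fun xn tn hxnS _ hxn htn => ?_⟩
  refine tendsto_of_isGradientDescentCurve_of_lojasiewicz hφflow hf' hk hε hθ hloj (fun T hT => ?_)
    hxnS hx₀ hxc hxn htn
  exact (hφcont.comp_continuous (continuous_id.prodMk continuous_const)
    fun x => ⟨mem_univ x, hT⟩).continuousAt

/-- Continuity of the extended negative gradient flow on the stable
set of a critical level satisfying a Łojasiewicz inequality with exponent 3/4: the flow
through any `x₀` in the stable set `S` converges to some `x_c`, and for any sequences
`x_n → x₀` in `S` and `t_n → ∞` one has `φ(x_n, t_n) → x_c`. -/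
theorem stmt14 {E : Type*} [NormedAddCommGroup E] [InnerProductSpace ℝ E]
    [FiniteDimensional ℝ E]
    (f : E → ℝ) (hf : ContDiff ℝ 1 f)
    (φ : E → ℝ → E)
    (hφcont : ContinuousOn (fun q : E × ℝ => φ q.1 q.2) (Set.univ ×ˢ Set.Ici (0:ℝ)))
    (hφ0 : ∀ x, φ x 0 = x)
    (hφflow : ∀ x, ∀ t : ℝ, 0 ≤ t →
      HasDerivWithinAt (φ x) (-(gradient f (φ x t))) (Set.Ici 0) t)
    (fc : ℝ) (k ε : ℝ) (hk : 0 < k) (hε : 0 < ε)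
    (hloj : ∀ x : E, |f x - fc| < ε → ‖gradient f x‖ ≥ k * |f x - fc| ^ ((3:ℝ)/4))
    (S : Set E)
    (hS : S = {x : E | Filter.Tendsto (fun t => f (φ x t)) Filter.atTop (nhds fc)})
    (x₀ : E) (hx₀ : x₀ ∈ S) :
    ∃ xc : E, Filter.Tendsto (fun t => φ x₀ t) Filter.atTop (nhds xc) ∧
      ∀ (xn : ℕ → E) (tn : ℕ → ℝ), (∀ m, xn m ∈ S) → (∀ m, 0 ≤ tn m) →
        Filter.Tendsto xn Filter.atTop (nhds x₀) →
        Filter.Tendsto tn Filter.atTop Filter.atTop →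
        Filter.Tendsto (fun m => φ (xn m) (tn m)) Filter.atTop (nhds xc) :=
  stmt14_general f hf φ hφcont hφflow fc k ε hk hε hloj S hS x₀ hx₀
end

section
/- For every J ⊆ {1,…,N}: (1) J is critical for A if and only if J ∪ {N+1} is critical for Ã; (2) if J is critical for A, then J is critical for Â; (3) J is critical for Â if and only if at least one of J or J ∪ {N+1} is critical for Ã. -/
noncomputable section

/-- `J` is critical for the family of vectors `w`: `w i` lies in the span of
`{w j : j ∈ J}` iff `i ∈ J`. -/
def CriticalFor {ι V : Type*} [AddCommGroup V] [Module ℝ V]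
    (w : ι → V) (J : Set ι) : Prop :=
  ∀ i, w i ∈ Submodule.span ℝ (w '' J) ↔ i ∈ J

/-- Relations between the critical subsets of the weight families
`Ã = (ũ_1, …, ũ_{N+1})`, `Â = (ũ_1, …, ũ_N)` and `A = (u_1, …, u_N)`, where
`u_j` is the image of `ũ_j` in the quotient by the span of `ũ_{N+1}`. -/
theorem stmt17 {V : Type*} [AddCommGroup V] [Module ℝ V] [FiniteDimensional ℝ V]
    (N : ℕ) (ut : Fin (N + 1) → V)
    (u : Fin N → V ⧸ Submodule.span ℝ {ut (Fin.last N)})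
    (hu : ∀ j : Fin N, u j = (Submodule.span ℝ {ut (Fin.last N)}).mkQ (ut j.castSucc))
    (J : Set (Fin N)) :
    (CriticalFor u J ↔ CriticalFor ut (Fin.castSucc '' J ∪ {Fin.last N})) ∧
    (CriticalFor u J → CriticalFor (fun j : Fin N => ut j.castSucc) J) ∧
    (CriticalFor (fun j : Fin N => ut j.castSucc) J ↔
      (CriticalFor ut (Fin.castSucc '' J) ∨
        CriticalFor ut (Fin.castSucc '' J ∪ {Fin.last N}))) := by
  set Wh := Submodule.span ℝ ((fun j : Fin N => ut j.castSucc) '' J) with hWh_def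
  have himg : u '' J = (Submodule.span ℝ {ut (Fin.last N)}).mkQ '' ((fun j : Fin N => ut j.castSucc) '' J) := by
    rw [Set.image_image]
    exact Set.image_congr fun j _ => hu j
  have hspanW : Submodule.span ℝ (u '' J) = Wh.map (Submodule.span ℝ {ut (Fin.last N)}).mkQ := by
    rw [himg, hWh_def, Submodule.span_image]
  have hhat : (fun j : Fin N => ut j.castSucc) '' J = ut '' (Fin.castSucc '' J) := by
    rw [Set.image_image]
  have hWh2 : Submodule.span ℝ (ut '' (Fin.castSucc '' J)) = Wh := by
    rw [hWh_def, hhat]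
  have hWt : Submodule.span ℝ (ut '' (Fin.castSucc '' J ∪ {Fin.last N})) = Wh ⊔ (Submodule.span ℝ {ut (Fin.last N)}) := by
    rw [Set.image_union, Set.image_singleton, Submodule.span_union, hWh2]
  have key : ∀ v : V, (Submodule.span ℝ {ut (Fin.last N)}).mkQ v ∈ Wh.map (Submodule.span ℝ {ut (Fin.last N)}).mkQ ↔ v ∈ Wh ⊔ (Submodule.span ℝ {ut (Fin.last N)}) := by
    intro v
    rw [← Submodule.mem_comap, Submodule.comap_map_eq, Submodule.ker_mkQ]
  have hcrit : ∀ j : Fin N,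
      (u j ∈ Submodule.span ℝ (u '' J) ↔ ut j.castSucc ∈ Wh ⊔ (Submodule.span ℝ {ut (Fin.last N)})) := by
    intro j
    rw [hspanW, hu j]
    exact key _
  have hne : ∀ i : Fin N, i.castSucc ≠ Fin.last N := fun i => (Fin.castSucc_lt_last i).ne
  have hmemset' : ∀ i : Fin N, (i.castSucc ∈ Fin.castSucc '' J ↔ i ∈ J) :=
    fun i => (Fin.castSucc_injective N).mem_set_image
  have hmemset : ∀ i : Fin N,
      (i.castSucc ∈ Fin.castSucc '' J ∪ {Fin.last N} ↔ i ∈ J) := by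
    intro i
    constructor
    · rintro (h | h)
      · exact (hmemset' i).mp h
      · exact absurd h (hne i)
    · exact fun h => Or.inl ((hmemset' i).mpr h)
  refine ⟨?_, ?_, ?_⟩
  · constructor
    · intro h i
      rw [hWt]
      induction i using Fin.lastCases with
      | last =>
        exact iff_of_true
          (Submodule.mem_sup_right (Submodule.mem_span_singleton_self _))
          (Or.inr rfl)
      | cast j =>
        rw [hmemset j, ← hcrit j]
        exact h j
    · intro h j
      have hj := h j.castSucc
      rw [hWt] at hj
      rw [hcrit j, hj, hmemset j]
  · intro h i
    constructor
    · intro hi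
      exact (h i).mp ((hcrit i).mpr (Submodule.mem_sup_left hi))
    · intro hi
      exact Submodule.subset_span (Set.mem_image_of_mem _ hi)
  · constructor
    · intro h
      by_cases ht : ut (Fin.last N) ∈ Wh
      · right
        intro i
        rw [hWt]
        have hsup : Wh ⊔ (Submodule.span ℝ {ut (Fin.last N)}) = Wh :=
          sup_eq_left.mpr ((Submodule.span_le).mpr (Set.singleton_subset_iff.mpr ht))
        induction i using Fin.lastCases with
        | last =>
          exact iff_of_true (Submodule.mem_sup_left ht) (Or.inr rfl)
        | cast j =>
          rw [hmemset j, hsup]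
          exact h j
      · left
        intro i
        rw [hWh2]
        induction i using Fin.lastCases with
        | last =>
          refine iff_of_false ht ?_
          rintro ⟨j, -, hj⟩
          exact hne j hj
        | cast j =>
          rw [hmemset' j]
          exact h j
    · rintro (h | h) i
      · have hi := h i.castSucc
        rw [hWh2] at hi
        rw [hi]
        exact hmemset' i
      · constructor
        · intro hi
          have := (h i.castSucc).mp (by rw [hWt]; exact Submodule.mem_sup_left hi)
          exact (hmemset i).mp this
        · intro hi
          exact Submodule.subset_span (Set.mem_image_of_mem _ hi)
end
end

section
/- If J ⊆ {1,…,N} is critical for Â, then exactly one of the following three cases holds: (1) J is critical for à and J is not critical for A; (2) J is critical for A and both J and J ∪ {N+1} are critical for Ã; (3) J is critical for A and J ∪ {N+1} is critical for Ã, while J is not critical for Ã. -/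
noncomputable section

/-- The trichotomy: if `J ⊆ {1,…,N}` is critical for `Â`, then exactly
one of the three listed cases holds, where `Ã = (ũ_1, …, ũ_{N+1})`,
`Â = (ũ_1, …, ũ_N)`, and `A = (u_1, …, u_N)` with `u_j` the image of `ũ_j` in the
quotient by the span of `ũ_{N+1}`. -/
theorem stmt18 {V : Type*} [AddCommGroup V] [Module ℝ V] [FiniteDimensional ℝ V]
    (N : ℕ) (ut : Fin (N + 1) → V)
    (u : Fin N → V ⧸ Submodule.span ℝ {ut (Fin.last N)})
    (hu : ∀ j : Fin N, u j = (Submodule.span ℝ {ut (Fin.last N)}).mkQ (ut j.castSucc))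
    (J : Set (Fin N))
    (hJ : CriticalFor (fun j : Fin N => ut j.castSucc) J) :
    (( (CriticalFor ut (Fin.castSucc '' J) ∧ ¬ CriticalFor u J) ∧
      ¬ (CriticalFor u J ∧ CriticalFor ut (Fin.castSucc '' J) ∧
          CriticalFor ut (Fin.castSucc '' J ∪ {Fin.last N})) ∧
      ¬ (CriticalFor u J ∧ CriticalFor ut (Fin.castSucc '' J ∪ {Fin.last N}) ∧
          ¬ CriticalFor ut (Fin.castSucc '' J))) ∨
    (¬ (CriticalFor ut (Fin.castSucc '' J) ∧ ¬ CriticalFor u J) ∧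
      ( (CriticalFor u J ∧ CriticalFor ut (Fin.castSucc '' J) ∧
          CriticalFor ut (Fin.castSucc '' J ∪ {Fin.last N}))) ∧
      ¬ (CriticalFor u J ∧ CriticalFor ut (Fin.castSucc '' J ∪ {Fin.last N}) ∧
          ¬ CriticalFor ut (Fin.castSucc '' J))) ∨
    (¬ (CriticalFor ut (Fin.castSucc '' J) ∧ ¬ CriticalFor u J) ∧
      ¬ (CriticalFor u J ∧ CriticalFor ut (Fin.castSucc '' J) ∧
          CriticalFor ut (Fin.castSucc '' J ∪ {Fin.last N})) ∧
      ( (CriticalFor u J ∧ CriticalFor ut (Fin.castSucc '' J ∪ {Fin.last N}) ∧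
          ¬ CriticalFor ut (Fin.castSucc '' J))))) := by
  classical
  let L : Submodule ℝ V := Submodule.span ℝ {ut (Fin.last N)}
  set S : Submodule ℝ V := Submodule.span ℝ ((fun j : Fin N => ut j.castSucc) '' J)
    with hS
  -- basic facts
  have hJ' : ∀ j : Fin N, ut j.castSucc ∈ S ↔ j ∈ J := fun j => by
    simpa using hJ j
  have himg : ut '' (Fin.castSucc '' J) = (fun j : Fin N => ut j.castSucc) '' J := by
    rw [Set.image_image]
  have hspan1 : Submodule.span ℝ (ut '' (Fin.castSucc '' J)) = S := by rw [himg]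
  have hspan2 : Submodule.span ℝ (ut '' (Fin.castSucc '' J ∪ {Fin.last N})) = S ⊔ L := by
    rw [Set.image_union, Submodule.span_union, himg, Set.image_singleton]
  have hlast : Fin.last N ∉ Fin.castSucc '' J := by
    rintro ⟨j, -, h⟩
    exact (Fin.castSucc_lt_last j).ne h
  have hmemim : ∀ j : Fin N, j.castSucc ∈ Fin.castSucc '' J ↔ j ∈ J := fun j =>
    (Fin.castSucc_injective N).mem_set_image
  have hspanU : Submodule.span ℝ (u '' J) = Submodule.map L.mkQ S := by
    have : u '' J = L.mkQ '' ((fun j : Fin N => ut j.castSucc) '' J) := by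
      rw [Set.image_image]
      exact Set.image_congr fun j _ => hu j
    rw [this, Submodule.span_image]
  have hmem' : ∀ j : Fin N, u j ∈ Submodule.span ℝ (u '' J) ↔
      ut j.castSucc ∈ S ⊔ L := by
    intro j
    rw [hu j, hspanU, ← Submodule.mem_comap, Submodule.comap_map_eq, Submodule.ker_mkQ]
  have hlastL : ut (Fin.last N) ∈ L := Submodule.subset_span rfl
  by_cases hP : ut (Fin.last N) ∈ S
  · -- Case 3
    have hSL : S ⊔ L = S := sup_eq_left.mpr (Submodule.span_le.mpr
      (Set.singleton_subset_iff.mpr hP))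
    have hcU : CriticalFor u J := by
      intro j
      rw [hmem' j, hSL]
      exact hJ' j
    have hnc : ¬ CriticalFor ut (Fin.castSucc '' J) := by
      intro h
      exact hlast ((h (Fin.last N)).mp (hspan1 ▸ hP))
    have hc2 : CriticalFor ut (Fin.castSucc '' J ∪ {Fin.last N}) := by
      intro i
      rw [hspan2, hSL]
      refine Fin.lastCases ?_ ?_ i
      · simp [hP]
      · intro j
        rw [hJ' j]
        constructor
        · intro hj; exact Or.inl ((hmemim j).mpr hj)
        · rintro (hj | hj)
          · exact (hmemim j).mp hj
          · exact absurd hj (Fin.castSucc_lt_last j).ne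
    refine Or.inr (Or.inr ⟨fun h => hnc h.1, fun h => hnc h.2.1, hcU, hc2, hnc⟩)
  · -- ut(last) ∉ S : criticality of castSucc '' J for ut holds
    have hc1 : CriticalFor ut (Fin.castSucc '' J) := by
      intro i
      rw [hspan1]
      refine Fin.lastCases ?_ ?_ i
      · simp [hP, hlast]
      · intro j
        rw [hJ' j, hmemim j]
    by_cases hQ : CriticalFor u J
    · -- Case 2
      have hc2 : CriticalFor ut (Fin.castSucc '' J ∪ {Fin.last N}) := by
        intro i
        rw [hspan2]
        refine Fin.lastCases ?_ ?_ i
        · simp [le_sup_right (a := S) (b := L) hlastL]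
        · intro j
          have : ut j.castSucc ∈ S ⊔ L ↔ j ∈ J := by
            rw [← hmem' j]; exact hQ j
          rw [this]
          constructor
          · intro hj; exact Or.inl ((hmemim j).mpr hj)
          · rintro (hj | hj)
            · exact (hmemim j).mp hj
            · exact absurd hj (Fin.castSucc_lt_last j).ne
      exact Or.inr (Or.inl ⟨fun h => h.2 hQ, ⟨hQ, hc1, hc2⟩, fun h => h.2.2 hc1⟩)
    · -- Case 1
      exact Or.inl ⟨⟨hc1, hQ⟩, fun h => hQ h.1, fun h => hQ h.1⟩
end
end
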